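/- arXiv:1304.0420 — 14 statements merged into one kernel-verified Lean document; each statement's English description precedes it below -/
import Mathlib

section
/- Let F ⊆ K be finite fields with |F| = q and [K : F] = n, and let α₀, α₁, …, α_{n−1} ∈ K. Then the family (α₀, …, α_{n−1}) is a basis of K as an F-vector space if and only if the n × n matrix A over K with entries A_{ij} = α_j^{q^i} (0 ≤ i, j < n) has nonzero determinant. -/
/-!
The `n` embeddings of `K` into an algebraic closure `E` over `F` are `x ↦ x ^ q ^ j`, `j < n`,
since the Frobenius has order `n`. Hence the matrix `(α j ^ q ^ i)`, seen in `E`, is the transposed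
embeddings matrix of `α`, and its squared determinant is the discriminant of `α`. That
discriminant vanishes when `α` is dependent, and not for a basis because the trace form of the
separable extension `K / F` is nondegenerate.
-/

open Matrix

namespace Algebra

variable {K L E ι : Type*} [Field K] [Field L] [Field E] [Algebra K L] [Algebra K E]
  [Module.Finite K L] [Algebra.IsSeparable K L] [IsAlgClosed E] [Fintype ι] [DecidableEq ι]

theorem discr_ne_zero_iff_linearIndependent {b : ι → L}
    (hcard : Fintype.card ι = Module.finrank K L) :
    discr K b ≠ 0 ↔ LinearIndependent K b :=
  ⟨not_imp_comm.mp (discr_zero_of_not_linearIndependent K), fun hb => by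
    simpa using discr_not_zero_of_basis K
      (Module.Basis.mk hb (hb.span_eq_top_of_card_eq_finrank' hcard).ge)⟩

theorem det_embeddingsMatrixReindex_ne_zero_iff (b : ι → L) (e : ι ≃ (L →ₐ[K] E)) :
    (embeddingsMatrixReindex K E b e).det ≠ 0 ↔ LinearIndependent K b := by
  have hcard : Fintype.card ι = Module.finrank K L := by
    rw [Fintype.card_congr e, AlgHom.card]
  rw [← discr_ne_zero_iff_linearIndependent hcard, ← pow_ne_zero_iff two_ne_zero,
    ← discr_eq_det_embeddingsMatrixReindex_pow_two, map_ne_zero]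

end Algebra

namespace FiniteField

variable (F K : Type*) [Field F] [Fintype F] [Field K] [Algebra F K] [Finite K]
  (E : Type*) [Field E] [IsAlgClosed E] [Algebra K E] [Algebra F E]
  [IsScalarTower F K E]

noncomputable def frobeniusPowEquivAlgHom : Fin (Module.finrank F K) ≃ (K →ₐ[F] E) :=
  have := Fintype.ofFinite K
  Equiv.ofBijective
    (fun i => (IsScalarTower.toAlgHom F K E).comp (frobeniusAlgHom F K ^ (i : ℕ))) <|
    (Fintype.bijective_iff_injective_and_card _).mpr
      ⟨fun i j h => (bijective_frobeniusAlgHom_pow F K).1 <| AlgHom.ext fun x =>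
        (IsScalarTower.toAlgHom F K E).injective (DFunLike.congr_fun h x), by simp⟩

theorem embeddingsMatrixReindex_frobeniusPowEquivAlgHom (α : Fin (Module.finrank F K) → K) :
    Algebra.embeddingsMatrixReindex F E α (frobeniusPowEquivAlgHom F K E) =
      ((of fun i j : Fin (Module.finrank F K) => α j ^ Fintype.card F ^ (i : ℕ)).map
        (algebraMap K E))ᵀ := by
  ext i j
  simp [Algebra.embeddingsMatrixReindex, frobeniusPowEquivAlgHom, coe_frobeniusAlgHom,
    pow_iterate]

end FiniteField

/-- A family of `n = [K : F]` elements of a finite field extension `K / F` with `|F| = q`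
is an `F`-basis of `K` iff the matrix with `(i,j)` entry `α j ^ q ^ i` has nonzero
determinant. -/
theorem stmt0 (F K : Type*) [Field F] [Fintype F] [Field K] [Fintype K] [Algebra F K]
    (n : ℕ) (hn : Module.finrank F K = n) (α : Fin n → K) :
    (LinearIndependent F α ∧ Submodule.span F (Set.range α) = ⊤) ↔
      (Matrix.of fun i j : Fin n => α j ^ Fintype.card F ^ (i : ℕ)).det ≠ 0 := by
  subst hn
  rw [and_iff_left_of_imp fun h => h.span_eq_top_of_card_eq_finrank' (by simp),
    ← Algebra.det_embeddingsMatrixReindex_ne_zero_iff α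
      (FiniteField.frobeniusPowEquivAlgHom F K (AlgebraicClosure K)),
    FiniteField.embeddingsMatrixReindex_frobeniusPowEquivAlgHom, det_transpose,
    ← RingHom.mapMatrix_apply, ← RingHom.map_det, map_ne_zero]
end

section
/- Let F be a finite field with q elements and let K be a field extension of F. Let a₀, a₁, …, a_n ∈ K and suppose α₀, α₁, …, α_{n−1} ∈ K each satisfy the q-linearized equation Σ_{i=0}^{n} a_i·α^{q^i} = 0. Let D = det((α_j^{q^i})_{0 ≤ i, j < n}) be the determinant of the n × n matrix with (i, j) entry α_j^{q^i}. Then a_n·D^q + (−1)^{n+1}·a₀·D = 0. -/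
theorem stmt2_aux (F K : Type*) [Field F] [Fintype F] [Field K] [Algebra F K]
    (m : ℕ) (a : Fin (m + 2) → K) (α : Fin (m + 1) → K)
    (h : ∀ j : Fin (m + 1),
      ∑ i : Fin (m + 2), a i * α j ^ Fintype.card F ^ (i : ℕ) = 0) :
    a (Fin.last (m + 1)) *
        (Matrix.of fun i j : Fin (m + 1) => α j ^ Fintype.card F ^ (i : ℕ)).det
          ^ Fintype.card F
      + (-1) ^ (m + 2) * a 0 *
        (Matrix.of fun i j : Fin (m + 1) => α j ^ Fintype.card F ^ (i : ℕ)).det = 0 := by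
  set q := Fintype.card F with hq
  obtain ⟨p, hpc⟩ := CharP.exists F
  haveI : Fact p.Prime := ⟨(CharP.char_is_prime F p)⟩
  obtain ⟨k, -, hcard⟩ := FiniteField.card F p
  haveI : CharP K p := charP_of_injective_algebraMap (algebraMap F K).injective p
  set M : Matrix (Fin (m + 1)) (Fin (m + 1)) K := Matrix.of fun i j : Fin (m + 1) => α j ^ q ^ (i : ℕ) with hM
  set φ : K →+* K := iterateFrobenius K p k with hφ
  have hφx : ∀ x : K, φ x = x ^ q := by
    intro x; rw [hφ, iterateFrobenius_def, ← hcard]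
  set N : Matrix (Fin (m + 1)) (Fin (m + 1)) K :=
    Matrix.of (fun i j : Fin (m + 1) => α j ^ q ^ ((i : ℕ) + 1)) with hN
  have hMN : M.map φ = N := by
    ext i j
    simp only [Matrix.map_apply, hM, hN, Matrix.of_apply, hφx, ← pow_mul, pow_succ]
  have hdet : M.det ^ q = N.det := by
    rw [← hMN, ← hφx, RingHom.map_det, RingHom.mapMatrix_apply]
  set P : Matrix (Fin (m + 1)) (Fin (m + 1)) K := M.submatrix (finRotate (m + 1)) id with hP
  have hNP : P.updateRow (Fin.last m) (fun j => α j ^ q ^ (m + 1)) = N := by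
    ext i j
    refine Fin.lastCases ?_ (fun i => ?_) i
    · simp [hN]
    · rw [Matrix.updateRow_ne (Fin.castSucc_lt_last i).ne]
      simp [hP, hM, hN, Fin.ext_iff, Nat.mod_eq_of_lt (by omega : (i : ℕ) + 1 < m + 1),
        coe_finRotate_of_ne_last (Fin.castSucc_lt_last i).ne]
  set c : Fin (m + 1) → K := fun i => -a ((finRotate (m + 1) i).castSucc) with hc
  have hrow : (fun j => a (Fin.last (m + 1)) * α j ^ q ^ (m + 1)) = ∑ i : Fin (m + 1), c i • P i := by
    funext j
    have hj := h j
    rw [Fin.sum_univ_castSucc] at hj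
    simp only [Fin.coe_castSucc, Fin.val_last] at hj
    have e1 : ∑ i : Fin (m + 1), c i • P i = ∑ i : Fin (m + 1), (fun i : Fin (m + 1) =>
        (-a i.castSucc) • (fun j => α j ^ q ^ (i : ℕ))) i :=
      Fintype.sum_equiv (finRotate (m + 1)) _ _ (fun i => by
        funext j'; simp [hc, hP, hM])
    rw [e1]
    simp only [Finset.sum_apply, Pi.smul_apply, smul_eq_mul, neg_mul, Finset.sum_neg_distrib]
    have : ∑ i : Fin (m + 1), a i.castSucc * α j ^ q ^ (i : ℕ) =
        -(a (Fin.last (m + 1)) * α j ^ q ^ (m + 1)) := by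
      linear_combination hj
    rw [this]
    ring
  have key : a (Fin.last (m + 1)) * N.det = (c (Fin.last m)) * P.det := by
    have h2 := Matrix.det_updateRow_sum P (Fin.last m) c
    rw [smul_eq_mul] at h2
    rw [← h2, ← hrow]
    have h3 : P.updateRow (Fin.last m) (fun j => a (Fin.last (m + 1)) * α j ^ q ^ (m + 1))
        = P.updateRow (Fin.last m) (a (Fin.last (m + 1)) • fun j => α j ^ q ^ (m + 1)) := by
      congr 1
    rw [h3, Matrix.det_updateRow_smul, hNP]
  have hclast : c (Fin.last m) = -a 0 := by
    simp [hc, finRotate_last]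
  have hPdet : P.det = (-1 : K) ^ m * M.det := by
    rw [hP, Matrix.det_permute, sign_finRotate]
    push_cast
    ring
  have hsign : ((-1 : K) ^ (m + 2)) = (-1) ^ m := by
    rw [pow_succ, pow_succ]; ring
  rw [hsign]
  show a (Fin.last (m + 1)) * M.det ^ q + (-1) ^ m * a 0 * M.det = 0
  rw [hdet, key, hclast, hPdet]
  ring

/-- Abel's formula in finite characteristic: if `α₀, …, α_{n-1}` are roots of the
`q`-linearized polynomial `∑ a_i x^{q^i}` and `D` is the determinant of the Moore-type
matrix `(α_j^{q^i})`, then `a_n·D^q + (−1)^{n+1}·a₀·D = 0`. -/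
theorem stmt2 (F K : Type*) [Field F] [Fintype F] [Field K] [Algebra F K]
    (n : ℕ) (a : Fin (n + 1) → K) (α : Fin n → K)
    (h : ∀ j : Fin n, ∑ i : Fin (n + 1), a i * α j ^ Fintype.card F ^ (i : ℕ) = 0) :
    a (Fin.last n) *
        (Matrix.of fun i j : Fin n => α j ^ Fintype.card F ^ (i : ℕ)).det ^ Fintype.card F
      + (-1) ^ (n + 1) * a 0 *
        (Matrix.of fun i j : Fin n => α j ^ Fintype.card F ^ (i : ℕ)).det = 0 := by
  match n, a, α, h with
  | 0, a, α, h =>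
      simp only [Matrix.det_isEmpty, one_pow, mul_one, pow_one]
      have : (Fin.last 0) = (0 : Fin 1) := rfl
      rw [this]; ring
  | m + 1, a, α, h => exact stmt2_aux F K m a α h
end

section
/- Let F ⊆ K be finite fields with |F| = q and [K : F] = n. If q is even, or if both q and n are odd, then K has a self-dual basis over F: there exists an F-basis (b₀, …, b_{n−1}) of K such that Tr_{K/F}(b_i·b_j) = 1 when i = j and Tr_{K/F}(b_i·b_j) = 0 when i ≠ j. -/
/-!
A self-dual basis is an orthonormal basis for the trace form `B x y = Tr(x y)`, which is symmetric
and nondegenerate.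

If `q` is even, every element is a square, so any `x` with `B x x ≠ 0` (e.g. a square root of an
element of nonzero trace) rescales to a unit vector, and unit vectors are split off one at a time.
The only obstruction is that the orthogonal complement of the unit vector `e` may be alternating;
then it contains `u, w` with `B u w = 1`, and `e + w` is a unit vector whose complement contains
the non-isotropic vector `e + u + w`.

If `q` and `n` are odd, diagonalise the trace form. A binary form `⟨α, β⟩` over a finite field of
odd order represents `1`, hence is isometric to `⟨1, αβ⟩`, so a diagonal form whose determinant is
a square is isometric to `⟨1, …, 1⟩`. The determinant is `det (σʲ bᵢ)²` with `σ` the Frobenius;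
`σ` permutes the columns of this matrix cyclically, an even permutation as `n` is odd, so
`det (σʲ bᵢ)` is fixed by `σ` and lies in `F`.
-/

open Module Polynomial
open LinearMap (BilinForm)

theorem FiniteField.exists_mul_sq_add_mul_sq_eq_one {F : Type*} [Field F] [Fintype F]
    (hF : Fintype.card F % 2 = 1) {a b : F} (ha : a ≠ 0) (hb : b ≠ 0) :
    ∃ x y : F, a * x ^ 2 + b * y ^ 2 = 1 := by
  have hb2 : (C b * X ^ 2 - C 1 : F[X]).degree = 2 := by
    rw [degree_sub_C] <;> rw [degree_C_mul_X_pow 2 hb] <;> norm_num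
  obtain ⟨x, y, hxy⟩ := FiniteField.exists_root_sum_quadratic (degree_C_mul_X_pow 2 ha) hb2 hF
  exact ⟨x, y, by simpa [← add_sub_assoc, sub_eq_zero] using hxy⟩

namespace LinearMap.BilinForm

variable {F V : Type*} [Field F] [AddCommGroup V] [Module F V] {B : BilinForm F V}

def IsOrthonormal {ι : Type*} (B : BilinForm F V) (v : ι → V) : Prop :=
  B.iIsOrtho v ∧ ∀ i, B (v i) (v i) = 1

theorem iIsOrtho.fin_cons (hB : B.IsSymm) {e : V} {k : ℕ} {v : Fin k → V} (hv : B.iIsOrtho v)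
    (hperp : ∀ i, B e (v i) = 0) : B.iIsOrtho (Fin.cons e v : Fin (k + 1) → V) := by
  intro i j hij
  induction i using Fin.cases <;> induction j using Fin.cases
  · exact absurd rfl hij
  · exact hperp _
  · exact (hB.eq _ _).trans (hperp _)
  · exact hv fun h => hij (congrArg Fin.succ h)

namespace IsOrthonormal

variable {ι : Type*} {v : ι → V}

theorem apply_eq [DecidableEq ι] (h : B.IsOrthonormal v) (i j : ι) :
    B (v i) (v j) = if i = j then 1 else 0 := by
  split_ifs with hij
  · exact hij ▸ h.2 i
  · exact h.1 hij

theorem linearIndependent (h : B.IsOrthonormal v) : LinearIndependent F v :=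
  linearIndependent_of_iIsOrtho h.1 fun i hi => one_ne_zero ((h.2 i).symm.trans hi)

theorem of_restrict {W : Submodule F V} {v : ι → W} (h : (B.restrict W).IsOrthonormal v) :
    B.IsOrthonormal fun i => (v i : V) :=
  h

theorem fin_cons (hB : B.IsSymm) {e : V} (he : B e e = 1) {k : ℕ} {v : Fin k → V}
    (hv : B.IsOrthonormal v) (hperp : ∀ i, B e (v i) = 0) :
    B.IsOrthonormal (Fin.cons e v : Fin (k + 1) → V) :=
  ⟨hv.1.fin_cons hB hperp, Fin.cases he hv.2⟩

end IsOrthonormal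

theorem exists_apply_self_eq_one (hsq : ∀ a : F, IsSquare a) {x : V} (hx : B x x ≠ 0) :
    ∃ e, B e e = 1 := by
  obtain ⟨r, hr⟩ := hsq (B x x)
  have hr0 : r ≠ 0 := by rintro rfl; exact hx (by simpa using hr)
  exact ⟨r⁻¹ • x, by simp [hr, hr0]⟩

theorem finrank_orthogonal_span_singleton_add_one [FiniteDimensional F V] {e : V}
    (he : B e e ≠ 0) : finrank F (B.orthogonal (F ∙ e)) + 1 = finrank F V := by
  rw [← Submodule.finrank_add_eq_of_isCompl (isCompl_span_singleton_orthogonal he),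
    finrank_span_singleton fun h => he (by simp [h]), add_comm]

theorem mem_orthogonal_span_singleton_iff {x m : V} : m ∈ B.orthogonal (F ∙ x) ↔ B x m = 0 := by
  rw [orthogonal_span_singleton_eq_toLin_ker]
  rfl

section CharTwo

variable [CharP F 2] [FiniteDimensional F V]

theorem exists_apply_self_eq_one_and_orthogonal_nonisotropic (hB : B.IsSymm)
    (hnd : B.Nondegenerate) {e : V} (he : B e e = 1) (hdim : 2 ≤ finrank F V) :
    ∃ e', B e' e' = 1 ∧ ∃ x ∈ B.orthogonal (F ∙ e'), B x x ≠ 0 := by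
  by_cases hW : ∃ x ∈ B.orthogonal (F ∙ e), B x x ≠ 0
  · exact ⟨e, he, hW⟩
  push Not at hW
  have he0 : B e e ≠ 0 := he ▸ one_ne_zero
  have : Nontrivial (B.orthogonal (F ∙ e)) := by
    have := finrank_orthogonal_span_singleton_add_one he0
    exact Module.nontrivial_of_finrank_pos (R := F) (by omega)
  obtain ⟨u, hu⟩ := exists_ne (0 : B.orthogonal (F ∙ e))
  obtain ⟨w, huw⟩ : ∃ w : B.orthogonal (F ∙ e), B u w ≠ 0 := by
    by_contra! h
    exact hu ((restrict_nondegenerate_orthogonal_spanSingleton B hnd hB.isRefl he0).1 u h)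
  set w' : V := (B u w)⁻¹ • (w : V)
  have heu : B e u = 0 := mem_orthogonal_span_singleton_iff.1 u.2
  have hew' : B e w' = 0 := by simp [w', mem_orthogonal_span_singleton_iff.1 w.2]
  have huw' : B u w' = 1 := by simp [w', inv_mul_cancel₀ huw]
  have huu : B u u = 0 := hW u u.2
  have hw'w' : B w' w' = 0 := hW w' (Submodule.smul_mem _ _ w.2)
  have hue : B u e = 0 := (hB.eq _ _).symm.trans heu
  have hw'e : B w' e = 0 := (hB.eq _ _).symm.trans hew'
  have hw'u : B w' u = 1 := (hB.eq _ _).symm.trans huw'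
  refine ⟨e + w', ?_, e + u + w', mem_orthogonal_span_singleton_iff.2 ?_, ?_⟩
  · simp [he, hew', hw'e, hw'w']
  · simp [he, heu, hew', hw'e, hw'u, hw'w', CharTwo.add_self_eq_zero]
  · simp [he, heu, hew', hue, hw'e, huw', hw'u, huu, hw'w', CharTwo.add_self_eq_zero]

theorem exists_isOrthonormal_of_charTwo (hsq : ∀ a : F, IsSquare a) (hB : B.IsSymm)
    (hnd : B.Nondegenerate) (hx : ∃ x, B x x ≠ 0) :
    ∃ v : Fin (finrank F V) → V, B.IsOrthonormal v := by
  obtain ⟨x, hx⟩ := hx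
  obtain ⟨d, hd⟩ : ∃ d, finrank F V = d + 1 := Nat.exists_eq_add_one.2 <|
    Module.finrank_pos_iff_exists_ne_zero.2 ⟨x, ne_zero_of_not_isOrtho_self x hx⟩
  rw [hd]
  induction d generalizing V with
  | zero =>
    obtain ⟨e, he⟩ := exists_apply_self_eq_one hsq hx
    exact ⟨fun _ => e, fun i j hij => absurd (Fin.subsingleton_one.elim i j) hij, fun _ => he⟩
  | succ d ih =>
    obtain ⟨e, he⟩ := exists_apply_self_eq_one hsq hx
    obtain ⟨e', he', y, hyW, hy⟩ :=
      exists_apply_self_eq_one_and_orthogonal_nonisotropic hB hnd he (by omega)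
    have he'0 : B e' e' ≠ 0 := he' ▸ one_ne_zero
    obtain ⟨v, hv⟩ := ih (hB.restrict _)
      (restrict_nondegenerate_orthogonal_spanSingleton B hnd hB.isRefl he'0) (x := ⟨y, hyW⟩) hy
      (by have := finrank_orthogonal_span_singleton_add_one he'0; omega)
    exact ⟨_, hv.of_restrict.fin_cons hB he' fun i => mem_orthogonal_span_singleton_iff.1 (v i).2⟩

end CharTwo

theorem apply_eq_zero_of_mem_span {s : Set V} {x z : V} (hx : x ∈ Submodule.span F s)
    (h : ∀ y ∈ s, B y z = 0) : B x z = 0 :=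
  (Submodule.span_le (p := LinearMap.ker (B.flip z))).2 h hx

theorem exists_diag_one_mul_in_span_pair [Fintype F] (hF : Fintype.card F % 2 = 1)
    {a b : V} (hab : B a b = 0) (hba : B b a = 0) (ha : B a a ≠ 0) (hb : B b b ≠ 0) :
    ∃ e f : V, B e e = 1 ∧ B f e = 0 ∧ B f f = B a a * B b b ∧
      e ∈ Submodule.span F {a, b} ∧ f ∈ Submodule.span F {a, b} := by
  obtain ⟨x, y, hxy⟩ := FiniteField.exists_mul_sq_add_mul_sq_eq_one hF ha hb
  have hmem : ∀ s t : F, s • a + t • b ∈ Submodule.span F {a, b} := fun s t =>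
    add_mem (Submodule.smul_mem _ _ (Submodule.subset_span (by simp)))
      (Submodule.smul_mem _ _ (Submodule.subset_span (by simp)))
  refine ⟨x • a + y • b, (B b b * y) • a + (-(B a a * x)) • b, ?_, ?_, ?_, hmem _ _,
    hmem _ _⟩ <;>
    simp only [map_add, map_smul, LinearMap.add_apply, LinearMap.smul_apply, smul_eq_mul, hab, hba]
  · linear_combination hxy
  · ring
  · linear_combination B a a * B b b * hxy

theorem exists_isOrthonormal_of_iIsOrtho [Fintype F] (hF : Fintype.card F % 2 = 1)
    (hB : B.IsSymm) {k : ℕ} (v : Fin k → V) (hv : B.iIsOrtho v) (hv0 : ∀ i, B (v i) (v i) ≠ 0)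
    (hsq : IsSquare (∏ i, B (v i) (v i))) :
    ∃ u : Fin k → V, B.IsOrthonormal u ∧ ∀ i, u i ∈ Submodule.span F (Set.range v) := by
  induction k with
  | zero => exact ⟨Fin.elim0, ⟨fun i => i.elim0, fun i => i.elim0⟩, fun i => i.elim0⟩
  | succ k ih =>
    rcases k with _ | k
    · obtain ⟨r, hr⟩ := hsq
      rw [Fin.prod_univ_one] at hr
      have hr0 : r ≠ 0 := by rintro rfl; exact hv0 0 (by simpa using hr)
      refine ⟨fun _ => r⁻¹ • v 0, ⟨fun i j hij => absurd (Fin.subsingleton_one.elim i j) hij,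
        fun _ => by simp [hr, hr0]⟩,
        fun _ => Submodule.smul_mem _ _ (Submodule.subset_span ⟨0, rfl⟩)⟩
    obtain ⟨e, f, hee, hfe, hff, he, hf⟩ :=
      exists_diag_one_mul_in_span_pair hF (hv zero_ne_one) (hv one_ne_zero) (hv0 0) (hv0 1)
    set v' : Fin (k + 1) → V := Fin.cons f fun i => v i.succ.succ
    have hpair : Submodule.span F {v 0, v 1} ≤ Submodule.span F (Set.range v) :=
      Submodule.span_mono (by rintro _ (rfl | rfl) <;> simp)
    have hperp : ∀ x ∈ Submodule.span F {v 0, v 1}, ∀ i : Fin k, B x (v i.succ.succ) = 0 := by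
      refine fun x hx i => apply_eq_zero_of_mem_span hx ?_
      rintro _ (rfl | rfl) <;> exact hv (by simp [Fin.ext_iff])
    have hv' : B.iIsOrtho v' :=
      iIsOrtho.fin_cons hB
        (hv.comp_of_injective ((Fin.succ_injective _).comp (Fin.succ_injective _))) (hperp f hf)
    have hv'0 : ∀ i, B (v' i) (v' i) ≠ 0 :=
      Fin.cases (by simpa [v', hff] using And.intro (hv0 0) (hv0 1)) fun i => hv0 _
    have hprod : ∏ i, B (v' i) (v' i) = ∏ i, B (v i) (v i) := by
      simp only [v', Fin.prod_univ_succ, Fin.cons_zero, Fin.cons_succ, hff, Fin.succ_zero_eq_one,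
        mul_assoc]
    obtain ⟨u, hu, huspan⟩ := ih v' hv' hv'0 (hprod ▸ hsq)
    have hspan : Submodule.span F (Set.range v') ≤ Submodule.span F (Set.range v) := by
      refine Submodule.span_le.2 ?_
      rintro _ ⟨i, rfl⟩
      induction i using Fin.cases
      · exact hpair hf
      · exact Submodule.subset_span ⟨_, rfl⟩
    have hv'e : ∀ i, B (v' i) e = 0 :=
      Fin.cases hfe fun i => (hB.eq _ _).trans (hperp e he i)
    refine ⟨Fin.cons e u, hu.fin_cons hB hee fun i => ?_,
      Fin.cases (hpair he) fun i => hspan (huspan i)⟩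
    rw [hB.eq]
    exact apply_eq_zero_of_mem_span (huspan i) (by rintro _ ⟨j, rfl⟩; exact hv'e j)

end LinearMap.BilinForm

namespace FiniteField

variable {F K : Type*} [Field F] [Fintype F] [Field K] [Fintype K] [Algebra F K]

theorem algebraMap_trace_eq_sum_frobenius_pow (x : K) :
    algebraMap F K (Algebra.trace F K x) =
      ∑ j : Fin (finrank F K), (frobeniusAlgEquivOfAlgebraic F K ^ (j : ℕ)) x := by
  rw [trace_eq_sum_automorphisms]
  exact ((bijective_frobeniusAlgEquivOfAlgebraic_pow F K).sum_comp fun σ => σ x).symm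

theorem frobenius_apply_pow_apply_eq_pow_finRotate (x : K) (j : Fin (finrank F K)) :
    frobeniusAlgEquivOfAlgebraic F K ((frobeniusAlgEquivOfAlgebraic F K ^ (j : ℕ)) x) =
      (frobeniusAlgEquivOfAlgebraic F K ^ (finRotate _ j : ℕ)) x := by
  have : NeZero (finrank F K) := ⟨finrank_pos.ne'⟩
  have h := pow_mod_orderOf (frobeniusAlgEquivOfAlgebraic F K) (j + 1)
  rw [orderOf_frobeniusAlgEquivOfAlgebraic] at h
  rw [finRotate_apply, Fin.val_add, Fin.val_one', Nat.add_mod_mod, h, pow_succ',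
    AlgEquiv.mul_apply]

theorem isSquare_discr_of_odd_finrank (hn : Odd (finrank F K)) (b : Fin (finrank F K) → K) :
    IsSquare (Algebra.discr F b) := by
  set φ := frobeniusAlgEquivOfAlgebraic F K
  let M : Matrix (Fin (finrank F K)) (Fin (finrank F K)) K := .of fun i j => (φ ^ (j : ℕ)) (b i)
  have hM : (Algebra.traceMatrix F b).map (algebraMap F K) = M * M.transpose := by
    ext i j
    simp [M, φ, Matrix.mul_apply, Algebra.traceMatrix_apply, algebraMap_trace_eq_sum_frobenius_pow]
  have hdiscr : algebraMap F K (Algebra.discr F b) = M.det ^ 2 := by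
    rw [Algebra.discr_def, RingHom.map_det, RingHom.mapMatrix_apply, hM, Matrix.det_mul,
      Matrix.det_transpose, sq]
  have hfix : φ M.det = M.det := by
    have hrot : M.map φ = M.submatrix id (finRotate _) := by
      ext i j
      exact frobenius_apply_pow_apply_eq_pow_finRotate (b i) j
    rw [AlgEquiv.map_det, AlgEquiv.mapMatrix_apply, hrot,
      Matrix.det_permute', sign_finRotate, (Nat.Odd.sub_odd hn odd_one).neg_one_pow, Units.val_one,
      Int.cast_one, one_mul]
  obtain ⟨c, hc⟩ : M.det ∈ Set.range (algebraMap F K) := by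
    refine (IsGalois.mem_range_algebraMap_iff_fixed _).2 fun σ => ?_
    obtain ⟨j, rfl⟩ := (bijective_frobeniusAlgEquivOfAlgebraic_pow F K).2 σ
    simp only [AlgEquiv.coe_pow]
    exact Function.IsFixedPt.iterate hfix _
  refine ⟨c, (algebraMap F K).injective ?_⟩
  rw [hdiscr, map_mul, hc, sq]

end FiniteField

section TraceForm

variable {F K : Type*} [Field F] [Fintype F] [Field K] [Fintype K] [Algebra F K]

theorem exists_isOrthonormal_traceForm_of_ringChar_eq_two (hF : ringChar F = 2) :
    ∃ v : Fin (finrank F K) → K, (Algebra.traceForm F K).IsOrthonormal v := by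
  have : CharP F 2 := ringChar.eq_iff.1 hF
  have : CharP K 2 := charP_of_injective_algebraMap' F 2
  obtain ⟨t, ht⟩ : ∃ t : K, Algebra.trace F K t ≠ 0 := by
    by_contra! h
    exact Algebra.trace_ne_zero F K (LinearMap.ext h)
  obtain ⟨s, rfl⟩ := FiniteField.isSquare_of_char_two (ringChar.eq K 2) t
  exact LinearMap.BilinForm.exists_isOrthonormal_of_charTwo
    (FiniteField.isSquare_of_char_two hF) (Algebra.traceForm_isSymm F)
    (traceForm_nondegenerate F K) ⟨s, ht⟩

theorem exists_isOrthonormal_traceForm_of_odd (hF : Fintype.card F % 2 = 1)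
    (hn : Odd (finrank F K)) :
    ∃ v : Fin (finrank F K) → K, (Algebra.traceForm F K).IsOrthonormal v := by
  have : Invertible (2 : F) := invertibleOfNonzero <| Ring.two_ne_zero fun h =>
    by simp [FiniteField.even_card_iff_char_two.1 h] at hF
  obtain ⟨b, hb⟩ := LinearMap.BilinForm.exists_orthogonal_basis
    (LinearMap.BilinForm.isSymm_iff.1 (Algebra.traceForm_isSymm F (S := K)))
  replace hb : (Algebra.traceForm F K).iIsOrtho b := hb
  have hdiag : Algebra.traceMatrix F b =
      Matrix.diagonal fun i => Algebra.traceForm F K (b i) (b i) := by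
    ext i j
    by_cases hij : i = j
    · simp [hij, Algebra.traceMatrix_apply]
    · simpa [hij, Algebra.traceMatrix_apply] using hb hij
  have hsq := FiniteField.isSquare_discr_of_odd_finrank hn b
  rw [Algebra.discr_def, hdiag, Matrix.det_diagonal] at hsq
  obtain ⟨v, hv, -⟩ := LinearMap.BilinForm.exists_isOrthonormal_of_iIsOrtho hF
    (Algebra.traceForm_isSymm F) b hb
    (hb.not_isOrtho_basis_self_of_nondegenerate (traceForm_nondegenerate F K)) hsq
  exact ⟨v, hv⟩

end TraceForm

/-- Existence of self-dual bases of a finite field extension `K / F` with `|F| = q` and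
`[K : F] = n`, when `q` is even or both `q` and `n` are odd. -/
theorem stmt3 (F K : Type*) [Field F] [Fintype F] [Field K] [Fintype K] [Algebra F K]
    (n : ℕ) (hn : Module.finrank F K = n)
    (hpar : Even (Fintype.card F) ∨ (Odd (Fintype.card F) ∧ Odd n)) :
    ∃ b : Module.Basis (Fin n) F K,
      ∀ i j : Fin n, Algebra.trace F K (b i * b j) = if i = j then 1 else 0 := by
  subst hn
  have : Nonempty (Fin (finrank F K)) := ⟨⟨0, finrank_pos⟩⟩
  obtain ⟨v, hv⟩ : ∃ v : Fin (finrank F K) → K, (Algebra.traceForm F K).IsOrthonormal v := by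
    rcases hpar with hq | ⟨hq, hn⟩
    · exact exists_isOrthonormal_traceForm_of_ringChar_eq_two
        (FiniteField.even_card_iff_char_two.2 (Nat.even_iff.1 hq))
    · exact exists_isOrthonormal_traceForm_of_odd (Nat.odd_iff.1 hq) hn
  refine ⟨basisOfLinearIndependentOfCardEqFinrank hv.linearIndependent (Fintype.card_fin _),
    fun i j => ?_⟩
  rw [coe_basisOfLinearIndependentOfCardEqFinrank]
  exact hv.apply_eq i j
end

section
/- Let F ⊆ K be finite fields with |F| = q and [K : F] = n ≥ 2. Then K has no self-dual power basis over F: there is no α ∈ K such that Tr_{K/F}(α^i · α^j) = 1 for all 0 ≤ i = j < n and Tr_{K/F}(α^i · α^j) = 0 for all 0 ≤ i ≠ j < n. -/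
/-- (Imamura) A finite field extension `K / F` of degree `n ≥ 2` has no self-dual power
basis: there is no `α ∈ K` with `Tr(α^i · α^j) = δ_{ij}` for all `0 ≤ i, j < n`. -/
theorem stmt4 (F K : Type*) [Field F] [Fintype F] [Field K] [Fintype K] [Algebra F K]
    (n : ℕ) (hn : Module.finrank F K = n) (hn2 : 2 ≤ n) :
    ¬∃ α : K, ∀ i j : Fin n,
      Algebra.trace F K (α ^ (i : ℕ) * α ^ (j : ℕ)) = if i = j then 1 else 0 := by
  rintro ⟨α, h⟩
  rcases eq_or_lt_of_le hn2 with h2 | h3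
  · -- n = 2 : Tr(1) = 2 and Tr(1) = 1
    have h00 := h ⟨0, by omega⟩ ⟨0, by omega⟩
    simp only [pow_zero, one_mul, if_pos rfl] at h00
    rw [show (1:K) = algebraMap F K 1 from (map_one _).symm, Algebra.trace_algebraMap,
      hn, ← h2] at h00
    norm_num at h00
    have : (1 : F) = 0 := by linear_combination h00
    exact one_ne_zero this
  · -- n ≥ 3 : Tr(α²) = 1 and Tr(α²) = 0
    have h11 := h ⟨1, by omega⟩ ⟨1, by omega⟩
    have h02 := h ⟨0, by omega⟩ ⟨2, by omega⟩
    rw [if_pos rfl] at h11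
    rw [if_neg (by simp [Fin.ext_iff])] at h02
    have : α ^ (1:ℕ) * α ^ (1:ℕ) = α ^ (0:ℕ) * α ^ (2:ℕ) := by ring
    rw [this, h02] at h11
    exact one_ne_zero h11.symm
end

section
/- (König–Rados) Let F be a finite field with q elements, let a : ℤ/(q−1) → F be a vector of coefficients, and let f(x) = a₀ + a₁x + ⋯ + a_{q−2}x^{q−2} ∈ F[x]. Then the number of distinct nonzero roots of f in F equals (q − 1) − r, where r is the rank of the (q−1) × (q−1) circulant matrix circ(a) over F. -/
/-!
Since `u ^ (q - 1) = 1` for every `u ∈ Fˣ`, the vector `(uⁱ)_{i ∈ ℤ/(q-1)}` is well defined and is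
an eigenvector of `circ(a)` with eigenvalue `f(u⁻¹)`. These `q - 1` eigenvectors are the columns of
an invertible Vandermonde matrix `V`, so `circ(a) V = V D` with `D = diag(f(u⁻¹))`, and the rank of
`circ(a)` is the number of units that are not roots of `f`.
-/

instance instNeZeroCardFieldSubOne (F : Type*) [Field F] [Fintype F] :
    NeZero (Fintype.card F - 1) :=
  ⟨Nat.sub_ne_zero_of_lt Fintype.one_lt_card⟩

open Matrix

namespace ZMod

variable {m : ℕ} [NeZero m]

theorem sum_fin_eq_sum_val {M : Type*} [AddCommMonoid M] (h : ZMod m → ℕ → M) :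
    ∑ i : Fin m, h (i : ℕ) i = ∑ t : ZMod m, h t t.val := by
  obtain ⟨n, rfl⟩ : ∃ n, m = n + 1 := Nat.exists_eq_succ_of_ne_zero (NeZero.ne m)
  exact Finset.sum_congr rfl fun i _ => congrArg (h · _) (natCast_zmod_val (n := n + 1) i)

theorem pow_val_sub_of_pow_eq_one {G : Type*} [Group G] {u : G} (hu : u ^ m = 1)
    (i t : ZMod m) : u ^ (i - t).val = u ^ i.val * u⁻¹ ^ t.val := by
  rw [inv_pow, eq_mul_inv_iff_mul_eq, ← pow_add, pow_eq_pow_iff_modEq]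
  refine Nat.ModEq.of_dvd (orderOf_dvd_of_pow_eq_one hu) ?_
  rw [← natCast_eq_natCast_iff]
  simp

theorem det_of_pow_val_ne_zero {R : Type*} [CommRing R] [IsDomain R] {v : ZMod m → R}
    (hv : Function.Injective v) : (of fun i k => v k ^ i.val).det ≠ 0 := by
  obtain ⟨n, rfl⟩ : ∃ n, m = n + 1 := Nat.exists_eq_succ_of_ne_zero (NeZero.ne m)
  change ((vandermonde v)ᵀ).det ≠ 0
  rw [det_transpose]
  exact det_vandermonde_ne_zero_iff.mpr hv

end ZMod

section Circulant

variable {R : Type*} [CommRing R] {m : ℕ} [NeZero m]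

theorem circulant_mulVec_pow_val (a : ZMod m → R) {u : Rˣ} (hu : u ^ m = 1) :
    circulant a *ᵥ (fun i => (u : R) ^ i.val) =
      (∑ t, a t * ((u⁻¹ : Rˣ) : R) ^ t.val) • fun i => (u : R) ^ i.val := by
  ext i
  simp only [mulVec, dotProduct, circulant_apply, Pi.smul_apply, smul_eq_mul, Finset.sum_mul]
  refine (Fintype.sum_equiv (Equiv.subLeft i) _ _ fun t => ?_).symm
  rw [Equiv.subLeft_apply, sub_sub_cancel, ← Units.val_pow_eq_pow_val u (i - t).val,
    ZMod.pow_val_sub_of_pow_eq_one hu]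
  push_cast
  ring

theorem circulant_mul_eq_mul_diagonal (a : ZMod m → R) {w : ZMod m → Rˣ}
    (hw : ∀ k, w k ^ m = 1) :
    circulant a * of (fun i k => (w k : R) ^ i.val) =
      of (fun i k => (w k : R) ^ i.val) *
        diagonal fun k => ∑ t, a t * (((w k)⁻¹ : Rˣ) : R) ^ t.val := by
  ext i k
  rw [mul_diagonal, of_apply, mul_comm, mul_apply]
  exact congrFun (circulant_mulVec_pow_val a (hw k)) i

end Circulant

section FiniteField

variable {F : Type*} [Field F] [Fintype F] [DecidableEq F]

theorem rank_circulant_eq_card_units {m : ℕ} [NeZero m] (hm : Fintype.card Fˣ = m)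
    (a : ZMod m → F) :
    (circulant a).rank = Fintype.card {u : Fˣ // ∑ t, a t * (u : F) ^ t.val ≠ 0} := by
  obtain ⟨e⟩ : Nonempty (ZMod m ≃ Fˣ) := Fintype.card_eq.mp (by rw [ZMod.card, hm])
  set V : Matrix (ZMod m) (ZMod m) F := of fun i k => (((e k)⁻¹ : Fˣ) : F) ^ i.val
  have hV : IsUnit V.det := (ZMod.det_of_pow_val_ne_zero
    (Units.val_injective.comp (inv_injective.comp e.injective))).isUnit
  have hdiag := circulant_mul_eq_mul_diagonal a (w := fun k => (e k)⁻¹)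
    fun k => by simpa only [hm] using pow_card_eq_one (x := (e k)⁻¹)
  simp only [inv_inv] at hdiag
  rw [← rank_mul_eq_left_of_isUnit_det V _ hV, hdiag, rank_mul_eq_right_of_isUnit_det V _ hV,
    rank_diagonal]
  exact Fintype.card_congr (e.subtypeEquiv fun _ => Iff.rfl)

theorem ncard_nonzero_roots_eq_card_units (p : F → F) :
    {x : F | x ≠ 0 ∧ p x = 0}.ncard = Fintype.card {u : Fˣ // p u = 0} := by
  rw [← Nat.card_coe_set_eq, Nat.card_eq_fintype_card]
  exact Fintype.card_congr
    { toFun := fun x => ⟨Units.mk0 x.1 x.2.1, x.2.2⟩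
      invFun := fun u => ⟨u.1, u.1.ne_zero, u.2⟩
      left_inv := fun _ => rfl
      right_inv := fun _ => Subtype.ext (Units.ext rfl) }

end FiniteField

/-- (König–Rados) The number of distinct nonzero roots in a finite field `F` with `q`
elements of `f(x) = a₀ + a₁x + ⋯ + a_{q−2}x^{q−2}` equals `(q − 1) − r`, where `r` is the
rank of the `(q−1) × (q−1)` circulant matrix built from the coefficient vector `a`. -/
theorem stmt5 (F : Type*) [Field F] [Fintype F]
    (a : ZMod (Fintype.card F - 1) → F) :
    Set.ncard {x : F | x ≠ 0 ∧
        ∑ i : Fin (Fintype.card F - 1), a ((i : ℕ) : ZMod (Fintype.card F - 1)) * x ^ (i : ℕ) = 0}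
      = (Fintype.card F - 1) - (Matrix.circulant a).rank := by
  classical
  have hm : Fintype.card Fˣ = Fintype.card F - 1 := Fintype.card_units F
  have hf (x : F) : ∑ i : Fin (Fintype.card F - 1), a ((i : ℕ) : ZMod _) * x ^ (i : ℕ) =
      ∑ t, a t * x ^ t.val := ZMod.sum_fin_eq_sum_val fun t n => a t * x ^ n
  simp only [hf]
  rw [ncard_nonzero_roots_eq_card_units, rank_circulant_eq_card_units hm,
    Fintype.card_subtype_compl]
  have := Fintype.card_subtype_le fun u : Fˣ => ∑ t, a t * (u : F) ^ t.val = 0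
  omega
end

section
/- Let p = kn + 1 be a prime with k, n ≥ 1, let g be a generator of the cyclic group (ℤ/p)ˣ, and for i ∈ ℤ/n define the Gaussian period of type (k, n): η_i = Σ_{j=0}^{k−1} exp(2πi·g^{jn+i}/p) ∈ ℂ. Then the n × n circulant matrix C = circ(η) over ℂ satisfies |det C|² = p^{n−1}. -/
/-!
The characters of `ZMod n` diagonalise every circulant matrix, so `det (circ η)` is the product
of the discrete Fourier coefficients `𝓕 η m`. For the Gaussian periods, `𝓕 η m` is the Gauss sum
of `e^{2πi x/p}` against the multiplicative character sending `g` to `e^{-2πi m/n}`: this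
character is constant on each coset `g^i ⟨g^n⟩` summed in `η_i`. That character is trivial
exactly when `m = 0`, where the Gauss sum is `-1`; otherwise it has absolute value `√p`.
-/

open Finset ZMod
open scoped Matrix

namespace ZMod

theorem sum_comp_val {M : Type*} [AddCommMonoid M] (n : ℕ) [NeZero n] (f : ℕ → M) :
    ∑ t : ZMod n, f t.val = ∑ r ∈ range n, f r := by
  refine sum_nbij' (fun t => t.val) (fun r => (r : ZMod n)) ?_ ?_ ?_ ?_ ?_ <;>
    simp +contextual [ZMod.val_lt, Nat.mod_eq_of_lt]

noncomputable def fourierMatrix (n : ℕ) [NeZero n] : Matrix (ZMod n) (ZMod n) ℂ :=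
  Matrix.of fun i m => stdAddChar (i * m)

variable {n : ℕ} [NeZero n]

theorem circulant_mul_fourierMatrix (η : ZMod n → ℂ) :
    Matrix.circulant η * fourierMatrix n = fourierMatrix n * Matrix.diagonal (𝓕 η) := by
  ext i m
  rw [Matrix.mul_diagonal, Matrix.mul_apply, dft_apply, mul_sum, ← Equiv.sum_comp (.subLeft i)]
  refine sum_congr rfl fun t _ => ?_
  simp only [Matrix.circulant_apply, fourierMatrix, Matrix.of_apply, Equiv.subLeft_apply,
    sub_sub_cancel, smul_eq_mul]
  rw [← mul_assoc, ← AddChar.map_add_eq_mul, mul_comm]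
  congr 2
  ring

theorem fourierMatrix_mul_conjTranspose :
    fourierMatrix n * (fourierMatrix n)ᴴ = (n : ℂ) • 1 := by
  classical
  ext i j
  simp only [Matrix.mul_apply, Matrix.conjTranspose_apply, fourierMatrix, Matrix.of_apply,
    RCLike.star_def, ← AddChar.map_neg_eq_conj, ← AddChar.map_add_eq_mul]
  simp_rw [show ∀ m : ZMod n, i * m + -(j * m) = m * (i - j) by intro m; ring]
  rw [AddChar.sum_mulShift _ (isPrimitive_stdAddChar n)]
  simp [Matrix.one_apply, sub_eq_zero]

theorem det_fourierMatrix_ne_zero : (fourierMatrix n).det ≠ 0 := by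
  intro h
  have := congrArg Matrix.det (fourierMatrix_mul_conjTranspose (n := n))
  simp only [Matrix.det_mul, h, zero_mul, Matrix.det_smul, Matrix.det_one, mul_one,
    ZMod.card] at this
  exact pow_ne_zero n (Nat.cast_ne_zero.mpr (NeZero.ne n)) this.symm

theorem det_circulant_eq_prod_dft (η : ZMod n → ℂ) :
    (Matrix.circulant η).det = ∏ m, 𝓕 η m := by
  have h := congrArg Matrix.det (circulant_mul_fourierMatrix η)
  rw [Matrix.det_mul, Matrix.det_mul, Matrix.det_diagonal, mul_comm] at h
  exact mul_left_cancel₀ det_fourierMatrix_ne_zero h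

end ZMod

theorem Finset.sum_range_mul {M : Type*} [AddCommMonoid M] (k n : ℕ) (f : ℕ → M) :
    ∑ s ∈ range (k * n), f s = ∑ j ∈ range k, ∑ r ∈ range n, f (j * n + r) := by
  induction k with
  | zero => simp
  | succ k ih => rw [add_mul, one_mul, sum_range_add, ih, sum_range_succ]

theorem IsCyclic.sum_range_card_pow {G M : Type*} [Group G] [Fintype G] [AddCommMonoid M]
    {g : G} (hg : ∀ x, x ∈ Subgroup.zpowers g) (f : G → M) :
    ∑ s ∈ range (Nat.card G), f (g ^ s) = ∑ x, f x := by
  classical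
  rw [← IsCyclic.image_range_card hg, sum_image]
  rw [← orderOf_eq_card_of_forall_mem_zpowers hg]
  exact fun a ha b hb => pow_injOn_Iio_orderOf (by simpa using ha) (by simpa using hb)

theorem MulChar.exists_apply_pow_eq_stdAddChar {M : Type*} [CommMonoid M] [Fintype M]
    [DecidableEq M] {g : Mˣ} (hg : ∀ x, x ∈ Subgroup.zpowers g) {n : ℕ} [NeZero n]
    (hn : n ∣ Fintype.card Mˣ) (m : ZMod n) :
    ∃ χ : MulChar M ℂ,
      (∀ s : ℕ, χ ((g : M) ^ s) = stdAddChar ((s : ZMod n) * m)) ∧ (χ = 1 ↔ m = 0) := by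
  have hζ : Circle.toUnits (toCircle m) ∈ rootsOfUnity (Fintype.card Mˣ) ℂ := by
    obtain ⟨c, hc⟩ := hn
    rw [_root_.mem_rootsOfUnity, ← map_pow, ← AddChar.map_nsmul_eq_pow, hc, mul_nsmul',
      nsmul_eq_mul, ZMod.natCast_self, zero_mul, AddChar.map_zero_eq_one, map_one]
  set χ := MulChar.ofRootOfUnity hζ hg
  have hχg : χ g = stdAddChar m := MulChar.ofRootOfUnity_spec hζ hg
  refine ⟨χ, fun s => ?_, ?_⟩
  · rw [map_pow, hχg, ← AddChar.map_nsmul_eq_pow, nsmul_eq_mul]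
  · rw [MulChar.eq_iff hg, hχg, MulChar.one_apply_coe,
      ← AddChar.map_zero_eq_one (stdAddChar (N := n)), injective_stdAddChar.eq_iff]

theorem gaussSum_eq_sum_units {R R' : Type*} [CommRing R] [Fintype R] [DecidableEq R]
    [CommRing R'] (χ : MulChar R R') (ψ : AddChar R R') :
    gaussSum χ ψ = ∑ u : Rˣ, χ u * ψ u := by
  refine (Fintype.sum_of_injective _ Units.val_injective _ _ (fun a ha => ?_) fun _ => rfl).symm
  rw [χ.map_nonunit fun hu => ha ⟨hu.unit, rfl⟩, zero_mul]

theorem norm_sq_gaussSum {F : Type*} [Field F] [Fintype F] {χ : MulChar F ℂ} (hχ : χ ≠ 1)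
    {ψ : AddChar F ℂ} (hψ : ψ.IsPrimitive) : ‖gaussSum χ ψ‖ ^ 2 = Fintype.card F := by
  have h := gaussSum_mul_gaussSum_eq_card hχ hψ
  rw [← star_gaussSum_eq, RCLike.star_def, Complex.mul_conj] at h
  rw [Complex.sq_norm]
  exact_mod_cast h

noncomputable def gaussianPeriod {p : ℕ} [NeZero p] (g : ZMod p) (k n : ℕ) (i : ZMod n) : ℂ :=
  ∑ j ∈ range k, stdAddChar (g ^ (j * n + i.val))

section GaussianPeriod

variable {p k n : ℕ} [Fact p.Prime] [NeZero n] {g : (ZMod p)ˣ}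

theorem exists_dft_gaussianPeriod_eq_gaussSum (hpkn : p = k * n + 1)
    (hg : ∀ x, x ∈ Subgroup.zpowers g) (m : ZMod n) :
    ∃ χ : MulChar (ZMod p) ℂ,
      (χ = 1 ↔ m = 0) ∧ 𝓕 (gaussianPeriod (g : ZMod p) k n) m = gaussSum χ stdAddChar := by
  have hcard : Fintype.card (ZMod p)ˣ = k * n := by rw [ZMod.card_units]; omega
  obtain ⟨χ, hχg, hχ1⟩ :=
    MulChar.exists_apply_pow_eq_stdAddChar hg (hcard ▸ dvd_mul_left n k) (-m)
  refine ⟨χ, by rw [hχ1, neg_eq_zero], ?_⟩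
  have hχ_period : ∀ (t : ZMod n) (j : ℕ),
      stdAddChar (-(t * m)) = χ ((g : ZMod p) ^ (j * n + t.val)) := by
    intro t j
    rw [hχg]
    push_cast
    rw [natCast_self, mul_zero, zero_add, natCast_zmod_val, mul_neg]
  set F : ℕ → ℂ := fun s => χ ((g : ZMod p) ^ s) * stdAddChar ((g : ZMod p) ^ s)
  calc 𝓕 (gaussianPeriod (g : ZMod p) k n) m
      = ∑ t : ZMod n, ∑ j ∈ range k, F (j * n + t.val) := by
        simp only [dft_apply, gaussianPeriod, smul_eq_mul, mul_sum]
        exact sum_congr rfl fun t _ => sum_congr rfl fun j _ => by rw [hχ_period t j]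
    _ = ∑ s ∈ range (Nat.card (ZMod p)ˣ), F s := by
        rw [Nat.card_eq_fintype_card, hcard, sum_range_mul, sum_comm]
        simp_rw [← sum_comp_val n]
    _ = gaussSum χ stdAddChar := by
        rw [gaussSum_eq_sum_units, ← IsCyclic.sum_range_card_pow hg]
        simp only [F, Units.val_pow_eq_pow_val]

theorem norm_sq_dft_gaussianPeriod (hpkn : p = k * n + 1)
    (hg : ∀ x, x ∈ Subgroup.zpowers g) (m : ZMod n) :
    ‖𝓕 (gaussianPeriod (g : ZMod p) k n) m‖ ^ 2 = if m = 0 then 1 else (p : ℝ) := by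
  obtain ⟨χ, hχ1, hχ⟩ := exists_dft_gaussianPeriod_eq_gaussSum hpkn hg m
  rw [hχ]
  split_ifs with hm
  · rw [hχ1.mpr hm, gaussSum_one_left (by simpa using isPrimitive_stdAddChar p one_ne_zero)]
    simp
  · rw [norm_sq_gaussSum (hχ1.not.mpr hm) (isPrimitive_stdAddChar p), ZMod.card]

theorem norm_sq_det_circulant_gaussianPeriod (hpkn : p = k * n + 1)
    (hg : ∀ x, x ∈ Subgroup.zpowers g) :
    ‖(Matrix.circulant (gaussianPeriod (g : ZMod p) k n)).det‖ ^ 2 = (p : ℝ) ^ (n - 1) := by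
  rw [det_circulant_eq_prod_dft, norm_prod, ← prod_pow]
  simp only [norm_sq_dft_gaussianPeriod hpkn hg]
  simp [prod_ite, filter_ne', card_erase_of_mem]

end GaussianPeriod

theorem stmt6_general (p k n : ℕ) [NeZero n] (hpkn : p = k * n + 1)
    (hp : Nat.Prime p) (g : (ZMod p)ˣ) (hg : ∀ x : (ZMod p)ˣ, x ∈ Subgroup.zpowers g)
    (η : ZMod n → ℂ)
    (hη : ∀ i : ZMod n, η i = ∑ j ∈ Finset.range k,
      Complex.exp (2 * Real.pi * Complex.I *
        ((((g : ZMod p) ^ (j * n + i.val)).val : ℂ)) / (p : ℂ))) :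
    ‖(Matrix.circulant η).det‖ ^ 2 = (p : ℝ) ^ (n - 1) := by
  have : Fact p.Prime := ⟨hp⟩
  obtain rfl : η = gaussianPeriod (g : ZMod p) k n := funext fun i => by
    simp only [hη i, gaussianPeriod, stdAddChar_apply, toCircle_apply]
  exact norm_sq_det_circulant_gaussianPeriod hpkn hg

/-- For a prime `p = kn + 1` with primitive root `g`, the circulant matrix of the Gaussian
periods `η_i = Σ_{j<k} exp(2πi·g^{jn+i}/p)` of type `(k, n)` has `|det C|² = p^{n−1}`. -/
theorem stmt6 (p k n : ℕ) [NeZero n] (hk : 1 ≤ k) (hpkn : p = k * n + 1)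
    (hp : Nat.Prime p) (g : (ZMod p)ˣ) (hg : ∀ x : (ZMod p)ˣ, x ∈ Subgroup.zpowers g)
    (η : ZMod n → ℂ)
    (hη : ∀ i : ZMod n, η i = ∑ j ∈ Finset.range k,
      Complex.exp (2 * Real.pi * Complex.I *
        ((((g : ZMod p) ^ (j * n + i.val)).val : ℂ)) / (p : ℂ))) :
    ‖(Matrix.circulant η).det‖ ^ 2 = (p : ℝ) ^ (n - 1) :=
  stmt6_general p k n hpkn hp g hg η hη
end

section
/- Let F ⊆ E ⊆ K be finite fields with q = |F|, n = [K : F] and d = [E : F]. If η ∈ K is a normal element of K over F (its conjugates η, η^q, …, η^{q^{n−1}} form an F-basis of K), then γ = Tr_{K/E}(η) is a normal element of E over F: the conjugates γ, γ^q, …, γ^{q^{d−1}} form an F-basis of E. -/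
/-!
The trace `Tr_{K/E}` is `F`-linear, surjective, and commutes with `x ↦ x ^ q`. Hence it maps
the spanning family `η ^ q ^ i` (`i < n`) onto a spanning family `γ ^ q ^ i` of `E`, where
`γ = Tr_{K/E}(η)`. As `γ ^ q ^ d = γ`, the first `d` conjugates already span `E`, and `d`
vectors spanning a `d`-dimensional space form a basis.
-/

open FiniteField

theorem span_range_comp_eq_top_of_surjective {R M N ι : Type*} [Semiring R] [AddCommMonoid M]
    [AddCommMonoid N] [Module R M] [Module R N] {f : M →ₗ[R] N} (hf : Function.Surjective f)
    {v : ι → M} (hv : Submodule.span R (Set.range v) = ⊤) :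
    Submodule.span R (Set.range (f ∘ v)) = ⊤ := by
  rw [Set.range_comp, ← Submodule.map_span, hv, Submodule.map_top, LinearMap.range_eq_top.mpr hf]

theorem frobeniusAlgHom_pow_apply {F K : Type*} [Field F] [Fintype F] [Field K] [Algebra F K]
    (i : ℕ) (x : K) : (frobeniusAlgHom F K ^ i) x = x ^ Fintype.card F ^ i := by
  rw [AlgHom.coe_pow, coe_frobeniusAlgHom, pow_iterate]

theorem trace_pow_card_pow {F E K : Type*} [Field F] [Fintype F] [Field E] [Field K]
    [Algebra E K] [Algebra F K] [FiniteDimensional E K] [IsGalois E K] (x : K) (i : ℕ) :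
    Algebra.trace E K (x ^ Fintype.card F ^ i) = Algebra.trace E K x ^ Fintype.card F ^ i := by
  apply (algebraMap E K).injective
  rw [map_pow (algebraMap E K), trace_eq_sum_automorphisms, trace_eq_sum_automorphisms,
    ← frobeniusAlgHom_pow_apply (F := F) i (∑ σ : K ≃ₐ[E] K, σ x), map_sum]
  simp only [frobeniusAlgHom_pow_apply, map_pow]

theorem pow_card_pow_mod_finrank {F E : Type*} [Field F] [Fintype F] [Field E] [Finite E]
    [Algebra F E] (y : E) (i : ℕ) :
    y ^ Fintype.card F ^ i = y ^ Fintype.card F ^ (i % Module.finrank F E) := by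
  have := Fintype.ofFinite E
  conv_lhs => rw [← Nat.div_add_mod i (Module.finrank F E), pow_add, pow_mul (Fintype.card F),
    ← Module.card_eq_pow_finrank, pow_mul, pow_card_pow]

theorem range_pow_card_pow_subset {F E : Type*} [Field F] [Fintype F] [Field E] [Finite E]
    [Algebra F E] (y : E) (n : ℕ) :
    Set.range (fun i : Fin n => y ^ Fintype.card F ^ (i : ℕ)) ⊆
      Set.range (fun i : Fin (Module.finrank F E) => y ^ Fintype.card F ^ (i : ℕ)) := by
  rintro _ ⟨i, rfl⟩
  exact ⟨⟨i % _, Nat.mod_lt _ Module.finrank_pos⟩, (pow_card_pow_mod_finrank y i).symm⟩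

theorem stmt7_general (F K : Type*) [Field F] [Fintype F] [Field K] [Fintype K] [Algebra F K]
    (E : IntermediateField F K) (n d : ℕ)
    (hd : Module.finrank F E = d)
    (η : K)
    (hη : LinearIndependent F (fun i : Fin n => η ^ Fintype.card F ^ (i : ℕ)) ∧
      Submodule.span F (Set.range fun i : Fin n => η ^ Fintype.card F ^ (i : ℕ)) = ⊤) :
    LinearIndependent F
        (fun i : Fin d => (Algebra.trace E K η) ^ Fintype.card F ^ (i : ℕ)) ∧
      Submodule.span F
        (Set.range fun i : Fin d => (Algebra.trace E K η) ^ Fintype.card F ^ (i : ℕ)) = ⊤ := by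
  subst hd
  have hsurj : Function.Surjective ((Algebra.trace E K).restrictScalars F) :=
    Algebra.trace_surjective E K
  have hspan_n : Submodule.span F
      (Set.range fun i : Fin n => Algebra.trace E K η ^ Fintype.card F ^ (i : ℕ)) = ⊤ := by
    simpa only [Function.comp_def, LinearMap.coe_restrictScalars, trace_pow_card_pow] using
      span_range_comp_eq_top_of_surjective hsurj hη.2
  have hspan := eq_top_mono (Submodule.span_mono (range_pow_card_pow_subset _ n)) hspan_n
  exact ⟨linearIndependent_of_top_le_span_of_card_eq_finrank hspan.ge (Fintype.card_fin _), hspan⟩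

/-- Normal basis projection: if `η` is a normal element of a finite field `K` over `F`
and `E` is an intermediate field, then `γ = Tr_{K/E}(η)` is a normal element of `E`
over `F`. -/
theorem stmt7 (F K : Type*) [Field F] [Fintype F] [Field K] [Fintype K] [Algebra F K]
    (E : IntermediateField F K) (n d : ℕ)
    (hn : Module.finrank F K = n) (hd : Module.finrank F E = d)
    (η : K)
    (hη : LinearIndependent F (fun i : Fin n => η ^ Fintype.card F ^ (i : ℕ)) ∧
      Submodule.span F (Set.range fun i : Fin n => η ^ Fintype.card F ^ (i : ℕ)) = ⊤) :
    LinearIndependent F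
        (fun i : Fin d => (Algebra.trace E K η) ^ Fintype.card F ^ (i : ℕ)) ∧
      Submodule.span F
        (Set.range fun i : Fin d => (Algebra.trace E K η) ^ Fintype.card F ^ (i : ℕ)) = ⊤ :=
  stmt7_general F K E n d hd η hη
end

section
/- (Semaev) Let L be a finite field, F a subfield of L with |F| = q, and E₁, E₂ intermediate fields of L/F with [E₁ : F] = r, [E₂ : F] = s, gcd(r, s) = 1 and [L : F] = r·s. If α ∈ E₁ is a normal element of E₁ over F and β ∈ E₂ is a normal element of E₂ over F, then the product αβ ∈ L is a normal element of L over F: the conjugates (αβ), (αβ)^q, …, (αβ)^{q^{rs−1}} form an F-basis of L. -/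
open Module Pointwise

private lemma pow_pow_mod {K : Type*} [Field K] [Fintype K] {q r : ℕ}
    (hcard : Fintype.card K = q ^ r) (a : K) (k : ℕ) :
    a ^ q ^ k = a ^ q ^ (k % r) := by
  have key : ∀ m, a ^ (q ^ r) ^ m = a := by
    intro m
    induction m with
    | zero => simp
    | succ m ih => rw [pow_succ, pow_mul, ih, ← hcard, FiniteField.pow_card]
  have e1 : q ^ k = (q ^ r) ^ (k / r) * q ^ (k % r) := by
    conv_lhs => rw [← Nat.div_add_mod k r]
    rw [pow_add, pow_mul]
  rw [e1, pow_mul, key]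

/-- (Semaev) If `α ∈ E₁` and `β ∈ E₂` are normal over `F`, where `E₁, E₂` are intermediate
fields of a finite field `L / F` of coprime degrees `r, s` with `[L : F] = r·s`, then
`αβ ∈ L` is a normal element of `L` over `F`. -/
theorem stmt8 (F L : Type*) [Field F] [Fintype F] [Field L] [Fintype L] [Algebra F L]
    (E₁ E₂ : IntermediateField F L) (r s : ℕ)
    (hr : Module.finrank F E₁ = r) (hs : Module.finrank F E₂ = s)
    (hcop : Nat.Coprime r s) (hL : Module.finrank F L = r * s)
    (α : E₁) (β : E₂)
    (hα : LinearIndependent F (fun i : Fin r => α ^ Fintype.card F ^ (i : ℕ)) ∧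
      Submodule.span F (Set.range fun i : Fin r => α ^ Fintype.card F ^ (i : ℕ)) = ⊤)
    (hβ : LinearIndependent F (fun i : Fin s => β ^ Fintype.card F ^ (i : ℕ)) ∧
      Submodule.span F (Set.range fun i : Fin s => β ^ Fintype.card F ^ (i : ℕ)) = ⊤) :
    LinearIndependent F
        (fun i : Fin (r * s) => ((α : L) * (β : L)) ^ Fintype.card F ^ (i : ℕ)) ∧
      Submodule.span F
        (Set.range fun i : Fin (r * s) =>
          ((α : L) * (β : L)) ^ Fintype.card F ^ (i : ℕ)) = ⊤ := by
  classical
  obtain ⟨hαi, hαs⟩ := hα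
  obtain ⟨hβi, hβs⟩ := hβ
  set q := Fintype.card F with hq
  have : FiniteDimensional F L := Module.Finite.of_finite
  have : FiniteDimensional F E₁ := inferInstance
  have : FiniteDimensional F E₂ := inferInstance
  have hrs_pos : 0 < r * s := by rw [← hL]; exact Module.finrank_pos
  have hr0 : 0 < r := Nat.pos_of_ne_zero (fun h => by simp [h] at hrs_pos)
  have hs0 : 0 < s := Nat.pos_of_ne_zero (fun h => by simp [h] at hrs_pos)
  haveI : Fintype ↥E₁ := Fintype.ofFinite _
  haveI : Fintype ↥E₂ := Fintype.ofFinite _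
  have hcard₁ : Fintype.card ↥E₁ = q ^ r := by
    rw [card_eq_pow_finrank (K := F) (V := ↥E₁), hr]
  have hcard₂ : Fintype.card ↥E₂ = q ^ s := by
    rw [card_eq_pow_finrank (K := F) (V := ↥E₂), hs]
  set cα : Fin r → L := fun i => (α : L) ^ q ^ (i : ℕ) with hcα
  set cβ : Fin s → L := fun j => (β : L) ^ q ^ (j : ℕ) with hcβ
  -- spans of the conjugates in L
  have span₁ : Submodule.span F (Set.range cα)
      = Subalgebra.toSubmodule E₁.toSubalgebra := by
    have h1 : Set.range cα
        = E₁.val.toLinearMap '' (Set.range fun i : Fin r => α ^ q ^ (i : ℕ)) := by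
      rw [← Set.range_comp]
      refine congrArg _ (funext fun i => ?_)
      simp [hcα]
    rw [h1, Submodule.span_image, hαs, Submodule.map_top]
    ext x
    simp [LinearMap.mem_range]
  have span₂ : Submodule.span F (Set.range cβ)
      = Subalgebra.toSubmodule E₂.toSubalgebra := by
    have h1 : Set.range cβ
        = E₂.val.toLinearMap '' (Set.range fun j : Fin s => β ^ q ^ (j : ℕ)) := by
      rw [← Set.range_comp]
      refine congrArg _ (funext fun j => ?_)
      simp [hcβ]
    rw [h1, Submodule.span_image, hβs, Submodule.map_top]
    ext x
    simp [LinearMap.mem_range]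
  -- the sup is everything
  have hsup : finrank F ↥(E₁ ⊔ E₂) = r * s := by
    have d1 : r ∣ finrank F ↥(E₁ ⊔ E₂) := by
      rw [← hr]
      exact ⟨_, (IntermediateField.finrank_bot_mul_relfinrank (le_sup_left :
        E₁ ≤ E₁ ⊔ E₂)).symm⟩
    have d2 : s ∣ finrank F ↥(E₁ ⊔ E₂) := by
      rw [← hs]
      exact ⟨_, (IntermediateField.finrank_bot_mul_relfinrank (le_sup_right :
        E₂ ≤ E₁ ⊔ E₂)).symm⟩
    have hd : r * s ∣ finrank F ↥(E₁ ⊔ E₂) := Nat.Coprime.mul_dvd_of_dvd_of_dvd hcop d1 d2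
    have hle : finrank F ↥(E₁ ⊔ E₂) ≤ r * s := by
      rw [← hL]
      exact Submodule.finrank_le (Subalgebra.toSubmodule (E₁ ⊔ E₂).toSubalgebra)
    have hpos : 0 < finrank F ↥(E₁ ⊔ E₂) := Module.finrank_pos
    exact le_antisymm hle (Nat.le_of_dvd hpos hd)
  -- the products span everything
  set g' : Fin r × Fin s → L := fun p => cα p.1 * cβ p.2 with hg'
  have hrange : Set.range g' = Set.range cα * Set.range cβ := by
    ext x
    constructor
    · rintro ⟨⟨i, j⟩, rfl⟩
      exact Set.mul_mem_mul ⟨i, rfl⟩ ⟨j, rfl⟩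
    · rintro ⟨a, ⟨i, rfl⟩, b, ⟨j, rfl⟩, rfl⟩
      exact ⟨(i, j), rfl⟩
  have hspan' : Submodule.span F (Set.range g') = ⊤ := by
    rw [hrange, ← Submodule.span_mul_span, span₁, span₂, Subalgebra.mul_toSubmodule,
      ← IntermediateField.sup_toSubalgebra_of_left]
    apply Submodule.eq_top_of_finrank_eq
    rw [hL]
    exact hsup
  -- the CRT reindexing
  set e : Fin (r * s) → Fin r × Fin s :=
    fun k => (⟨(k : ℕ) % r, Nat.mod_lt _ hr0⟩, ⟨(k : ℕ) % s, Nat.mod_lt _ hs0⟩) with he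
  have hinj : Function.Injective e := by
    intro k₁ k₂ h
    rw [Prod.ext_iff] at h
    obtain ⟨h1, h2⟩ := h
    have h1' : (k₁ : ℕ) % r = (k₂ : ℕ) % r := congrArg Fin.val h1
    have h2' : (k₁ : ℕ) % s = (k₂ : ℕ) % s := congrArg Fin.val h2
    have := (Nat.modEq_and_modEq_iff_modEq_mul hcop).1 ⟨h1', h2'⟩
    exact Fin.ext (by rwa [Nat.ModEq, Nat.mod_eq_of_lt k₁.isLt,
      Nat.mod_eq_of_lt k₂.isLt] at this)
  have hsurj : Function.Surjective e :=
    ((Fintype.bijective_iff_injective_and_card e).2 ⟨hinj, by simp⟩).2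
  have hfg : (fun k : Fin (r * s) => ((α : L) * (β : L)) ^ q ^ (k : ℕ)) = g' ∘ e := by
    funext k
    have h1 : (α : L) ^ q ^ (k : ℕ) = (α : L) ^ q ^ ((k : ℕ) % r) := by
      have := congrArg (fun x : E₁ => (x : L)) (pow_pow_mod hcard₁ α (k : ℕ))
      simpa using this
    have h2 : (β : L) ^ q ^ (k : ℕ) = (β : L) ^ q ^ ((k : ℕ) % s) := by
      have := congrArg (fun x : E₂ => (x : L)) (pow_pow_mod hcard₂ β (k : ℕ))
      simpa using this
    simp only [Function.comp, hg', he, hcα, hcβ, mul_pow]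
    rw [h1, h2]
  have hrange_f : (Set.range fun k : Fin (r * s) => ((α : L) * (β : L)) ^ q ^ (k : ℕ))
      = Set.range g' := by
    rw [hfg, Set.range_comp, hsurj.range_eq, Set.image_univ]
  have hspan : Submodule.span F
      (Set.range fun k : Fin (r * s) => ((α : L) * (β : L)) ^ q ^ (k : ℕ)) = ⊤ := by
    rw [hrange_f]; exact hspan'
  exact ⟨linearIndependent_of_top_le_span_of_card_eq_finrank (le_of_eq hspan.symm)
    (by simp [hL]), hspan⟩
end

section
/- (Standard normal test) Let F ⊆ K be finite fields with q = |F| and n = [K : F], and let φ : K → K be the F-linear Frobenius endomorphism φ(x) = x^q; for f(x) = Σ_i a_i x^i ∈ F[x] and η ∈ K write f ∘ η = Σ_i a_i η^{q^i}, i.e. the evaluation at η of the F-linear endomorphism f(φ). Then an element η ∈ K is a normal element of K over F if and only if for every irreducible polynomial g(x) ∈ F[x] dividing xⁿ − 1, one has ((xⁿ − 1)/g(x)) ∘ η ≠ 0. -/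
open Polynomial

/-- Evaluation at `η` of the `F`-linear operator `f(φ)`, where `φ(x) = x^q` is the
Frobenius: `f ∘ η = Σ_i a_i η^{q^i}` for `f(x) = Σ_i a_i x^i ∈ F[x]`. -/
noncomputable def frobEval {F K : Type*} [Field F] [Field K] [Algebra F K]
    (q : ℕ) (f : Polynomial F) (η : K) : K :=
  ∑ i ∈ Finset.range (f.natDegree + 1), algebraMap F K (f.coeff i) * η ^ q ^ i

section Aux

variable (F K : Type*) [Field F] [Fintype F] [Field K] [Fintype K] [Algebra F K]

/-- The Frobenius `x ↦ x ^ |F|` as an `F`-linear endomorphism of `K`. -/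
noncomputable def frobLin : K →ₗ[F] K where
  toFun x := x ^ Fintype.card F
  map_add' x y := by
    obtain ⟨p, hp⟩ := CharP.exists F
    haveI : CharP F p := hp
    obtain ⟨m, hprime, hcard⟩ := FiniteField.card F p
    haveI : Fact p.Prime := ⟨hprime⟩
    haveI : CharP K p := charP_of_injective_algebraMap (algebraMap F K).injective p
    rw [hcard]
    exact add_pow_char_pow x y p m
  map_smul' a x := by
    simp only [Algebra.smul_def, mul_pow, RingHom.id_apply]
    rw [← map_pow, FiniteField.pow_card]

variable {F K}

lemma frobLin_pow (i : ℕ) : ∀ x : K, ((frobLin F K ^ i) x) = x ^ Fintype.card F ^ i := by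
  induction i with
  | zero => intro x; simp
  | succ i ih =>
    intro x
    rw [pow_succ, Module.End.mul_apply, ih]
    show (x ^ Fintype.card F) ^ Fintype.card F ^ i = _
    rw [← pow_mul, ← pow_succ']

lemma frobEval_eq (f : Polynomial F) (η : K) :
    frobEval (Fintype.card F) f η = (aeval (frobLin F K) f) η := by
  rw [aeval_eq_sum_range, LinearMap.coe_sum, Finset.sum_apply]
  unfold frobEval
  refine Finset.sum_congr rfl fun i _ => ?_
  rw [LinearMap.smul_apply, frobLin_pow, Algebra.smul_def]

lemma frobMul (f g : Polynomial F) (η : K) :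
    (aeval (frobLin F K) (f * g)) η = (aeval (frobLin F K) f) ((aeval (frobLin F K) g) η) := by
  rw [map_mul, Module.End.mul_apply]

end Aux

/-- (Standard normal test) An element `η` of a finite field extension `K / F` with
`|F| = q` and `[K : F] = n` is normal over `F` iff `((xⁿ − 1)/g(x)) ∘ η ≠ 0` for every
irreducible factor `g` of `xⁿ − 1` in `F[x]`. -/
theorem stmt9 (F K : Type*) [Field F] [Fintype F] [Field K] [Fintype K] [Algebra F K]
    (n : ℕ) (hn : Module.finrank F K = n) (η : K) :
    (LinearIndependent F (fun i : Fin n => η ^ Fintype.card F ^ (i : ℕ)) ∧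
        Submodule.span F (Set.range fun i : Fin n => η ^ Fintype.card F ^ (i : ℕ)) = ⊤) ↔
      ∀ g : Polynomial F, Irreducible g → g ∣ (X ^ n - 1 : Polynomial F) →
        frobEval (Fintype.card F) ((X ^ n - 1 : Polynomial F) / g) η ≠ 0 := by
  classical
  set φ := frobLin F K with hφ
  have hn0 : 0 < n := hn ▸ Module.finrank_pos
  have hXn_deg : (X ^ n - 1 : Polynomial F).natDegree = n := by
    have : (X ^ n - 1 : Polynomial F) = X ^ n - C 1 := by rw [map_one]
    rw [this, natDegree_X_pow_sub_C]
  have hXn_ne : (X ^ n - 1 : Polynomial F) ≠ 0 := fun h => by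
    simp [h] at hXn_deg; omega
  -- X^n - 1 annihilates η
  have hann : (aeval φ (X ^ n - 1 : Polynomial F)) η = 0 := by
    rw [map_sub, map_pow, aeval_X, map_one, LinearMap.sub_apply, Module.End.one_apply,
      frobLin_pow]
    have hcard : Fintype.card K = Fintype.card F ^ n := by
      rw [Module.card_eq_pow_finrank (K := F) (V := K), hn]
    rw [← hcard, FiniteField.pow_card, sub_self]
  -- the key intermediate property
  have key : LinearIndependent F (fun i : Fin n => η ^ Fintype.card F ^ (i : ℕ)) ↔
      ∀ f : Polynomial F, f ≠ 0 → f.natDegree < n → (aeval φ f) η ≠ 0 := by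
    constructor
    · intro li f hf0 hdeg hval
      apply hf0
      have hsum : ∑ i : Fin n, f.coeff (i : ℕ) • η ^ Fintype.card F ^ (i : ℕ) = 0 := by
        rw [← hval, aeval_eq_sum_range' hdeg, LinearMap.coe_sum, Finset.sum_apply,
          ← Fin.sum_univ_eq_sum_range (fun i => (f.coeff i • φ ^ i) η) n]
        refine Finset.sum_congr rfl fun i _ => ?_
        rw [LinearMap.smul_apply, frobLin_pow]
      have := Fintype.linearIndependent_iff.mp li _ hsum
      ext i
      rcases lt_or_ge i n with h | h
      · simpa using this ⟨i, h⟩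
      · simp [Polynomial.coeff_eq_zero_of_natDegree_lt (lt_of_lt_of_le hdeg h)]
    · intro P
      rw [Fintype.linearIndependent_iff]
      intro g hg i
      set f : Polynomial F := ∑ i : Fin n, C (g i) * X ^ (i : ℕ) with hf
      have hcoeff : ∀ j : Fin n, f.coeff (j : ℕ) = g j := by
        intro j
        rw [hf, finset_sum_coeff]
        rw [Finset.sum_eq_single j]
        · simp
        · intro b _ hbj
          rw [coeff_C_mul, coeff_X_pow, if_neg (fun h => hbj (Fin.ext h.symm)), mul_zero]
        · simp
      have hdeg : f.natDegree < n := by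
        have hle : f.natDegree ≤ n - 1 := by
          rw [hf]
          refine natDegree_sum_le_of_forall_le _ _ fun j _ => ?_
          exact (natDegree_C_mul_X_pow_le (g j) _).trans (by have := j.isLt; omega)
        omega
      by_cases hf0 : f = 0
      · rw [← hcoeff i, hf0, coeff_zero]
      · exfalso
        apply P f hf0 hdeg
        rw [hf, map_sum, LinearMap.coe_sum, Finset.sum_apply]
        rw [← hg]
        refine Finset.sum_congr rfl fun j _ => ?_
        rw [map_mul, aeval_C, map_pow, aeval_X, Module.End.mul_apply,
          Module.algebraMap_end_apply, frobLin_pow]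
  constructor
  · rintro ⟨li, -⟩ g hirr hdvd
    have hg0 : g ≠ 0 := hirr.ne_zero
    set h := (X ^ n - 1 : Polynomial F) / g with hh
    have hgh : g * h = X ^ n - 1 := EuclideanDomain.mul_div_cancel' hg0 hdvd
    have hh0 : h ≠ 0 := fun h0 => hXn_ne (by rw [← hgh, h0, mul_zero])
    have hdeg : h.natDegree < n := by
      have := natDegree_mul hg0 hh0
      rw [hgh, hXn_deg] at this
      have := hirr.natDegree_pos
      omega
    rw [frobEval_eq]
    exact (key.mp li) h hh0 hdeg
  · intro H
    have li : LinearIndependent F (fun i : Fin n => η ^ Fintype.card F ^ (i : ℕ)) := by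
      rw [key]
      intro f hf0 hdeg hval
      set d := EuclideanDomain.gcd f (X ^ n - 1 : Polynomial F) with hd
      have hd0 : d ≠ 0 := fun h0 => hf0 ((EuclideanDomain.gcd_eq_zero_iff.mp h0).1)
      have hdann : (aeval φ d) η = 0 := by
        rw [hd, EuclideanDomain.gcd_eq_gcd_ab, map_add, LinearMap.add_apply,
          mul_comm f, mul_comm (X ^ n - 1 : Polynomial F), frobMul, frobMul, hval, hann,
          map_zero, map_zero, add_zero]
      have hddvd : d ∣ (X ^ n - 1 : Polynomial F) := EuclideanDomain.gcd_dvd_right _ _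
      set h := (X ^ n - 1 : Polynomial F) / d with hh
      have hdh : d * h = X ^ n - 1 := EuclideanDomain.mul_div_cancel' hd0 hddvd
      have hh0 : h ≠ 0 := fun h0 => hXn_ne (by rw [← hdh, h0, mul_zero])
      have hddeg : d.natDegree < n := by
        have h2 := natDegree_le_of_dvd (EuclideanDomain.gcd_dvd_left f (X ^ n - 1 : Polynomial F)) hf0
        rw [← hd] at h2
        omega
      have hhdeg : 0 < h.natDegree := by
        have := natDegree_mul hd0 hh0
        rw [hdh, hXn_deg] at this
        omega
      obtain ⟨g, hgirr, hgdvd⟩ :=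
        WfDvdMonoid.exists_irreducible_factor (not_isUnit_of_natDegree_pos h hhdeg) hh0
      obtain ⟨k, hk⟩ := hgdvd
      have hgdvd' : g ∣ (X ^ n - 1 : Polynomial F) := by
        rw [← hdh, hk]; exact ⟨d * k, by ring⟩
      refine H g hgirr hgdvd' ?_
      have hquot : (X ^ n - 1 : Polynomial F) / g = d * k := by
        have hgne : g ≠ 0 := hgirr.ne_zero
        have hmul : g * ((X ^ n - 1 : Polynomial F) / g) = g * (d * k) :=
          (EuclideanDomain.mul_div_cancel' hgne hgdvd').trans (by rw [← hdh, hk]; ring)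
        exact mul_left_cancel₀ hgne hmul
      rw [frobEval_eq, hquot, mul_comm, frobMul, hdann, map_zero]
    haveI : Nonempty (Fin n) := ⟨⟨0, hn0⟩⟩
    refine ⟨li, ?_⟩
    apply li.span_eq_top_of_card_eq_finrank
    simp [hn]
end

section
/- (Gcd normal test) Let F ⊆ K be finite fields with q = |F| and n = [K : F], and let η ∈ K. The conjugates η, η^q, …, η^{q^{n−1}} form an F-basis of K if and only if the polynomials xⁿ − 1 and g(x) = η + η^q·x + η^{q²}·x² + ⋯ + η^{q^{n−1}}·x^{n−1} are coprime in K[x] (i.e. they generate the unit ideal of K[x]). -/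
/-!
Write `f = Xⁿ - 1`, `g = ∑ η^{qⁱ} Xⁱ` and let the Frobenius `σ : x ↦ x^q` act on coefficients.
Since `η^{qⁿ} = η`, one has `X σ(g) = g + η f`. Hence if `σ(h) = h`, the remainder `r` of `h g`
modulo `f` satisfies `f ∣ X σ(r) - r`, which forces `r = 0` as soon as its coefficient of
`X^{n-1}` vanishes; that coefficient is `∑ hᵢ η^{q^{n-1-i}}`. So for `h ∈ F[X]` of degree `< n`,
`f ∣ h g` exactly when the coefficients of `h` give an `F`-linear relation among the conjugates.
If `f` and `g` are coprime, `f ∣ h g` forces `h = 0`. If not, their monic gcd `d` is `σ`-fixed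
(`σ(d)` still divides `f` and `g`), so `f / d` is a nonzero polynomial over `F` of degree `< n`
with `f ∣ (f / d) g`.
-/

open Polynomial

theorem natDegree_X_pow_sub_one {R : Type*} [Ring R] [Nontrivial R] (n : ℕ) :
    (X ^ n - 1 : R[X]).natDegree = n := by
  rw [← C_1, natDegree_X_pow_sub_C]

theorem monic_X_pow_sub_one {R : Type*} [Ring R] {n : ℕ} (hn : n ≠ 0) :
    (X ^ n - 1 : R[X]).Monic := by
  simpa using monic_X_pow_sub_C (1 : R) hn

theorem linearIndependent_iff_forall_polynomial {R M : Type*} [Ring R] [AddCommGroup M]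
    [Module R M] {n : ℕ} (v : Fin n → M) :
    LinearIndependent R v ↔
      ∀ p : R[X], p.degree < n → ∑ i : Fin n, p.coeff i • v i = 0 → p = 0 := by
  rw [Fintype.linearIndependent_iff, ← (degreeLTEquiv R n).toEquiv.forall_congr_right]
  simp only [Subtype.forall, mem_degreeLT]
  refine forall₂_congr fun p hp => imp_congr_right fun _ => ?_
  rw [← degreeLTEquiv_eq_zero_iff_eq_zero (mem_degreeLT.2 hp), funext_iff]
  rfl

noncomputable def conjugatePolynomial {R : Type*} [Semiring R] (q n : ℕ) (η : R) : R[X] :=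
  ∑ i ∈ Finset.range n, C (η ^ q ^ i) * X ^ i

section conjugatePolynomial

variable {R : Type*} {q n : ℕ}

section Semiring

variable [Semiring R] {η : R}

theorem coeff_conjugatePolynomial (i : ℕ) :
    (conjugatePolynomial q n η).coeff i = if i < n then η ^ q ^ i else 0 := by
  simp only [conjugatePolynomial, finsetSum_coeff, coeff_C_mul_X_pow, Finset.sum_ite_eq,
    Finset.mem_range]

theorem natDegree_conjugatePolynomial_le : (conjugatePolynomial q n η).natDegree ≤ n - 1 :=
  natDegree_le_iff_coeff_eq_zero.2 fun i hi => by
    rw [coeff_conjugatePolynomial, if_neg (by omega)]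

theorem coeff_mul_conjugatePolynomial (h : R[X]) (hn : 0 < n) :
    (h * conjugatePolynomial q n η).coeff (n - 1) =
      ∑ i : Fin n, h.coeff i * η ^ q ^ (i.rev : ℕ) := by
  rw [coeff_mul, Finset.Nat.sum_antidiagonal_eq_sum_range_succ_mk,
    show (n - 1).succ = n by omega, ← Fin.sum_univ_eq_sum_range]
  refine Finset.sum_congr rfl fun i _ => ?_
  rw [coeff_conjugatePolynomial, if_pos (by omega), Fin.val_rev]
  congr 3
  omega

end Semiring

theorem X_mul_map_conjugatePolynomial [CommRing R] {η : R} (σ : R →+* R) (hσ : σ η = η ^ q)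
    (hη : η ^ q ^ n = η) :
    X * (conjugatePolynomial q n η).map σ = conjugatePolynomial q n η + C η * (X ^ n - 1) := by
  have hshift := Finset.sum_range_succ' (fun i => C (η ^ q ^ i) * X ^ i) n
  rw [Finset.sum_range_succ, hη, pow_zero, pow_one, pow_zero, mul_one] at hshift
  have hX : X * (conjugatePolynomial q n η).map σ =
      ∑ i ∈ Finset.range n, C (η ^ q ^ (i + 1)) * X ^ (i + 1) := by
    simp only [conjugatePolynomial, Polynomial.map_sum, Polynomial.map_mul, map_C,
      Polynomial.map_pow, map_X, Finset.mul_sum]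
    refine Finset.sum_congr rfl fun i _ => ?_
    rw [map_pow, hσ, ← pow_mul, ← pow_succ']
    ring
  rw [hX, conjugatePolynomial]
  linear_combination -hshift

end conjugatePolynomial

section Field

variable {K : Type*} [Field K]

theorem eq_zero_of_X_pow_sub_one_dvd_X_mul_map_sub (σ : K →+* K) {n : ℕ} {r : K[X]}
    (hr : r.natDegree < n) (hrn : r.coeff (n - 1) = 0)
    (hdvd : (X ^ n - 1 : K[X]) ∣ X * r.map σ - r) : r = 0 := by
  by_contra hr0
  have hlt : r.natDegree < n - 1 := by
    refine lt_of_le_of_ne (by omega) fun h => hr0 ?_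
    rw [← leadingCoeff_eq_zero, leadingCoeff, h, hrn]
  have hdeg : (X * r.map σ).natDegree = r.natDegree + 1 := by
    rw [natDegree_X_mul (map_ne_zero hr0), natDegree_map]
  have hfix : X * r.map σ - r = 0 := by
    refine eq_zero_of_dvd_of_natDegree_lt hdvd ?_
    rw [natDegree_X_pow_sub_one]
    exact (natDegree_sub_le _ _).trans_lt (by omega)
  have := congrArg natDegree (sub_eq_zero.1 hfix)
  omega

theorem X_pow_sub_one_dvd_iff_coeff_eq_zero (σ : K →+* K) {n : ℕ} (hn : 0 < n) {P : K[X]}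
    (hP : P.natDegree < 2 * n - 1) (hσ : (X ^ n - 1 : K[X]) ∣ X * P.map σ - P) :
    (X ^ n - 1 : K[X]) ∣ P ↔ P.coeff (n - 1) = 0 := by
  set f : K[X] := X ^ n - 1 with hf_def
  have hf : f.Monic := monic_X_pow_sub_one hn.ne'
  have hfdeg : f.natDegree = n := natDegree_X_pow_sub_one n
  have hPru := modByMonic_add_div P f
  -- `P /ₘ f` has degree at most `n - 2`, so `P` and `P %ₘ f` share the coefficient of `X^(n-1)`.
  have hu : (P /ₘ f).coeff (n - 1) = 0 := by
    rcases lt_or_ge P.natDegree n with h | h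
    · rw [(divByMonic_eq_zero_iff hf).2 (degree_lt_degree (by omega)), coeff_zero]
    · exact coeff_eq_zero_of_natDegree_lt (by rw [natDegree_divByMonic _ hf]; omega)
  have hcoeff : P.coeff (n - 1) = (P %ₘ f).coeff (n - 1) := by
    conv_lhs => rw [← hPru]
    rw [coeff_add, hf_def, sub_mul, one_mul, coeff_sub, coeff_X_pow_mul', if_neg (by omega), hu,
      sub_zero, add_zero]
  have hr : f ∣ X * (P %ₘ f).map σ - P %ₘ f := by
    have hfσ : f.map σ = f := by simp [f]
    have hsplit : X * P.map σ - P =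
        (X * (P %ₘ f).map σ - P %ₘ f) + f * (X * (P /ₘ f).map σ - P /ₘ f) := by
      conv_lhs => rw [← hPru]
      rw [Polynomial.map_add, Polynomial.map_mul, hfσ]
      ring
    exact (dvd_add_left (dvd_mul_right _ _)).1 (hsplit ▸ hσ)
  rw [← modByMonic_eq_zero_iff_dvd hf, hcoeff]
  refine ⟨fun hr0 => by rw [hr0, coeff_zero],
    fun hrn => eq_zero_of_X_pow_sub_one_dvd_X_mul_map_sub σ ?_ hrn hr⟩
  exact hfdeg ▸ natDegree_modByMonic_lt P hf fun hf1 => by simp [hf1] at hfdeg; omega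

theorem exists_map_eq_self_dvd_mul_of_not_isCoprime (σ : K →+* K) {f g : K[X]} (hf0 : f ≠ 0)
    (hfσ : f.map σ = f) (hg : f ∣ X * g.map σ - g) (hfg : ¬IsCoprime f g) :
    ∃ h : K[X], h ≠ 0 ∧ h.natDegree < f.natDegree ∧ h.map σ = h ∧ f ∣ h * g := by
  classical
  have hd0 : gcd f g ≠ 0 := fun hd => hf0 ((gcd_eq_zero_iff f g).1 hd).1
  have hd : (gcd f g).Monic := normalize_gcd f g ▸ monic_normalize hd0
  have hdpos : 0 < (gcd f g).natDegree :=
    hd.natDegree_pos.2 fun h1 => hfg ((gcd_isUnit_iff f g).1 (by rw [h1]; exact isUnit_one))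
  have hσd : (gcd f g).map σ = gcd f g := by
    have hσdf : (gcd f g).map σ ∣ f := (map_dvd σ (gcd_dvd_left f g)).trans (dvd_of_eq hfσ)
    have hσdg : (gcd f g).map σ ∣ g := by
      have := (map_dvd σ (gcd_dvd_right f g)).mul_left X
      simpa using dvd_sub this (hσdf.trans hg)
    exact (eq_of_monic_of_dvd_of_natDegree_le (hd.map σ) hd (dvd_gcd hσdf hσdg)
      (natDegree_map σ).ge).symm
  obtain ⟨h, hfdh⟩ := gcd_dvd_left f g
  obtain ⟨g', hgd⟩ := gcd_dvd_right f g
  generalize gcd f g = d at *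
  have hh0 : h ≠ 0 := by rintro rfl; exact hf0 (by rw [hfdh, mul_zero])
  refine ⟨h, hh0, ?_, ?_, ⟨g', ?_⟩⟩
  · rw [hfdh, natDegree_mul hd0 hh0]
    omega
  · refine mul_left_cancel₀ hd0 ?_
    conv_lhs => rw [← hσd]
    rw [← Polynomial.map_mul, ← hfdh, hfσ]
  · rw [hfdh, hgd]; ring

theorem X_pow_sub_one_dvd_mul_conjugatePolynomial_iff (σ : K →+* K) {q n : ℕ} {η : K}
    (hn : 0 < n) (hσ : σ η = η ^ q) (hη : η ^ q ^ n = η) {h : K[X]} (hhσ : h.map σ = h)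
    (hh : h.natDegree < n) :
    (X ^ n - 1 : K[X]) ∣ h * conjugatePolynomial q n η ↔
      ∑ i : Fin n, h.coeff i * η ^ q ^ (i.rev : ℕ) = 0 := by
  rw [← coeff_mul_conjugatePolynomial h hn]
  refine X_pow_sub_one_dvd_iff_coeff_eq_zero σ hn
    (natDegree_mul_le.trans_lt ?_) ⟨h * C η, ?_⟩
  · have := natDegree_conjugatePolynomial_le (q := q) (n := n) (η := η)
    omega
  · rw [Polynomial.map_mul, hhσ, mul_left_comm, X_mul_map_conjugatePolynomial σ hσ hη]
    ring

end Field

section FiniteField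

open FiniteField

variable {F K : Type*} [Field F] [Fintype F] [Field K] [Algebra F K]

theorem X_pow_sub_one_dvd_map_mul_conjugatePolynomial_iff {n : ℕ} (hn : 0 < n) {η : K}
    (hη : η ^ Fintype.card F ^ n = η) {p : F[X]} (hp : p.degree < n) :
    (X ^ n - 1 : K[X]) ∣ p.map (algebraMap F K) * conjugatePolynomial (Fintype.card F) n η ↔
      ∑ i : Fin n, p.coeff i • η ^ Fintype.card F ^ (i.rev : ℕ) = 0 := by
  have hfix : (p.map (algebraMap F K)).map (frobeniusAlgHom F K : K →+* K) =
      p.map (algebraMap F K) := by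
    rw [map_map, AlgHom.comp_algebraMap]
  rw [X_pow_sub_one_dvd_mul_conjugatePolynomial_iff _ hn (frobeniusAlgHom_apply F K η) hη hfix]
  · simp only [coeff_map, Algebra.smul_def]
  · rw [natDegree_map]
    rcases eq_or_ne p 0 with rfl | hp0
    · simpa using hn
    · exact (natDegree_lt_iff_degree_lt hp0).2 hp

theorem mem_lifts_of_map_frobeniusAlgHom_eq [Finite K] {h : K[X]}
    (hh : h.map (frobeniusAlgHom F K : K →+* K) = h) : h ∈ lifts (algebraMap F K) := by
  refine (lifts_iff_coeff_lifts h).2 fun i => (IsGalois.mem_range_algebraMap_iff_fixed _).2 ?_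
  intro τ
  obtain ⟨k, rfl⟩ := (bijective_frobeniusAlgEquivOfAlgebraic_pow F K).2 τ
  have hi : h.coeff i ^ Fintype.card F = h.coeff i := by
    simpa using congrArg (coeff · i) hh
  rw [AlgEquiv.coe_pow, coe_frobeniusAlgEquivOfAlgebraic]
  exact Function.iterate_fixed hi k

theorem isCoprime_X_pow_sub_one_conjugatePolynomial_iff [Finite K] {n : ℕ} (hn : 0 < n) {η : K}
    (hη : η ^ Fintype.card F ^ n = η) :
    IsCoprime (X ^ n - 1 : K[X]) (conjugatePolynomial (Fintype.card F) n η) ↔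
      ∀ p : F[X], p.degree < n →
        (X ^ n - 1 : K[X]) ∣ p.map (algebraMap F K) * conjugatePolynomial (Fintype.card F) n η →
          p = 0 := by
  refine ⟨fun hcop p hp hdvd => ?_, fun hrel => ?_⟩
  · refine (Polynomial.map_eq_zero_iff (algebraMap F K).injective).1
      (eq_zero_of_dvd_of_degree_lt (hcop.dvd_of_dvd_mul_right hdvd) ?_)
    rwa [degree_map, degree_eq_natDegree (monic_X_pow_sub_one hn.ne').ne_zero,
      natDegree_X_pow_sub_one]
  · by_contra hcop
    obtain ⟨h, hh0, hhdeg, hhσ, hdvd⟩ := exists_map_eq_self_dvd_mul_of_not_isCoprime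
      (frobeniusAlgHom F K : K →+* K) (monic_X_pow_sub_one hn.ne').ne_zero (by simp)
      ⟨C η, by
        rw [X_mul_map_conjugatePolynomial (frobeniusAlgHom F K : K →+* K)
          (frobeniusAlgHom_apply F K η) hη]
        ring⟩ hcop
    obtain ⟨p, rfl⟩ := (mem_lifts h).1 (mem_lifts_of_map_frobeniusAlgHom_eq hhσ)
    have hp0 : p ≠ 0 := by rintro rfl; exact hh0 (Polynomial.map_zero _)
    rw [natDegree_map, natDegree_X_pow_sub_one] at hhdeg
    exact hp0 (hrel p ((natDegree_lt_iff_degree_lt hp0).1 hhdeg) hdvd)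

end FiniteField

/-- (Gcd normal test) The conjugates of `η ∈ K` form an `F`-basis of `K` iff `xⁿ − 1` and
`g(x) = η + η^q x + ⋯ + η^{q^{n−1}} x^{n−1}` are coprime in `K[x]`. -/
theorem stmt10 (F K : Type*) [Field F] [Fintype F] [Field K] [Fintype K] [Algebra F K]
    (n : ℕ) (hn : Module.finrank F K = n) (η : K) :
    (LinearIndependent F (fun i : Fin n => η ^ Fintype.card F ^ (i : ℕ)) ∧
        Submodule.span F (Set.range fun i : Fin n => η ^ Fintype.card F ^ (i : ℕ)) = ⊤) ↔
      IsCoprime ((X : Polynomial K) ^ n - 1)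
        (∑ i ∈ Finset.range n, C (η ^ Fintype.card F ^ i) * X ^ i) := by
  have hn0 : 0 < n := hn ▸ Module.finrank_pos
  have hη : η ^ Fintype.card F ^ n = η := by
    rw [← hn, ← Module.card_eq_pow_finrank]; exact FiniteField.pow_card η
  rw [and_iff_left_of_imp fun hli => hli.span_eq_top_of_card_eq_finrank' (by simp [hn]),
    ← linearIndependent_equiv Fin.revPerm, linearIndependent_iff_forall_polynomial]
  change _ ↔ IsCoprime _ (conjugatePolynomial _ n η)
  rw [isCoprime_X_pow_sub_one_conjugatePolynomial_iff hn0 hη]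
  refine forall₂_congr fun p hp => ?_
  rw [X_pow_sub_one_dvd_map_mul_conjugatePolynomial_iff hn0 hη hp]
  rfl
end

section
/- Let F ⊆ K be finite fields with q = |F| and n = [K : F]. Suppose η ∈ K is a normal element of K over F, and let δ₀, δ₁, …, δ_{n−1} ∈ K be the dual family of the normal basis, i.e. Tr_{K/F}(η^{q^i}·δ_j) = 1 if i = j and 0 if i ≠ j, for all 0 ≤ i, j < n. Then δ_j = δ₀^{q^j} for every 0 ≤ j < n; in particular the dual basis of a normal basis is again a normal basis, generated by δ₀. -/
/-!
Write `σ` for the Frobenius `x ↦ x ^ q` of `K` over `F`, so that the normal basis is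
`(σ^i η)_i` and `σ ^ n = 1`. Since the trace is `σ`-invariant,
`Tr(σ^i η · σ^j δ₀) = Tr(σ^(i-j) η · δ₀)`, which is `1` if `i = j` and `0` otherwise,
indices taken mod `n`. So `σ^j δ₀` satisfies the defining relations of `δ_j`, and these
determine `δ_j` because the trace form of a separable extension is nondegenerate.
-/

open Algebra

section TraceDuality

variable {F K : Type*} [Field F] [Field K] [Algebra F K]

theorem eq_of_forall_trace_mul_eq [FiniteDimensional F K] [Algebra.IsSeparable F K]
    {ι : Type*} {b : ι → K} (hb : Submodule.span F (Set.range b) = ⊤) {x y : K}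
    (h : ∀ i, trace F K (b i * x) = trace F K (b i * y)) : x = y := by
  rw [← sub_eq_zero]
  refine (traceForm_nondegenerate F K).2 _ fun z => ?_
  have hzero : (traceForm F K).flip (x - y) = 0 :=
    LinearMap.ext_on_range hb fun i => by simp [h i]
  simpa [mul_sub] using LinearMap.congr_fun hzero z

theorem trace_pow_apply_mul_pow_apply_of_pow_eq_one {n : ℕ} [NeZero n] {σ : K ≃ₐ[F] K}
    (hσ : σ ^ n = 1) (x y : K) (i j : Fin n) :
    trace F K ((σ ^ (i : ℕ)) x * (σ ^ (j : ℕ)) y) =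
      trace F K ((σ ^ ((i - j : Fin n) : ℕ)) x * y) := by
  have hi : σ ^ (i : ℕ) = σ ^ (j : ℕ) * σ ^ ((i - j : Fin n) : ℕ) := by
    rw [← pow_add, add_comm, pow_eq_pow_mod (_ + _) hσ, ← Fin.val_add, sub_add_cancel]
  rw [hi, AlgEquiv.mul_apply, ← map_mul, trace_eq_of_algEquiv]

theorem dual_eq_pow_apply_of_pow_eq_one [FiniteDimensional F K] [Algebra.IsSeparable F K]
    {n : ℕ} [NeZero n] {σ : K ≃ₐ[F] K} (hσ : σ ^ n = 1) {η : K}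
    (hspan : Submodule.span F (Set.range fun i : Fin n => (σ ^ (i : ℕ)) η) = ⊤)
    {δ : Fin n → K}
    (hδ : ∀ i j : Fin n, trace F K ((σ ^ (i : ℕ)) η * δ j) = if i = j then 1 else 0)
    (j : Fin n) : δ j = (σ ^ (j : ℕ)) (δ 0) := by
  refine eq_of_forall_trace_mul_eq hspan fun i => ?_
  simp only [hδ, trace_pow_apply_mul_pow_apply_of_pow_eq_one hσ, sub_eq_zero]

end TraceDuality

/-- The dual basis of a normal basis is again a normal basis: if `η` is normal over `F`
and `(δ_j)` is the dual family of the normal basis `(η^{q^i})`, then `δ_j = δ₀^{q^j}`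
for all `j`. -/
theorem stmt11 (F K : Type*) [Field F] [Fintype F] [Field K] [Fintype K] [Algebra F K]
    (n : ℕ) (hn : Module.finrank F K = n) (η : K)
    (hη : LinearIndependent F (fun i : Fin n => η ^ Fintype.card F ^ (i : ℕ)) ∧
      Submodule.span F (Set.range fun i : Fin n => η ^ Fintype.card F ^ (i : ℕ)) = ⊤)
    (δ : Fin n → K)
    (hδ : ∀ i j : Fin n,
      Algebra.trace F K (η ^ Fintype.card F ^ (i : ℕ) * δ j) = if i = j then 1 else 0) :
    ∀ j : Fin n, δ j = δ ⟨0, hn ▸ Module.finrank_pos⟩ ^ Fintype.card F ^ (j : ℕ) := by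
  have : NeZero n := ⟨hn ▸ Module.finrank_pos.ne'⟩
  set σ := FiniteField.frobeniusAlgEquivOfAlgebraic F K
  have hσ : σ ^ n = 1 := hn ▸ FiniteField.orderOf_frobeniusAlgEquivOfAlgebraic F K ▸
    pow_orderOf_eq_one σ
  have hσ_apply (m : ℕ) (x : K) : (σ ^ m) x = x ^ Fintype.card F ^ m := by
    rw [AlgEquiv.coe_pow, FiniteField.coe_frobeniusAlgEquivOfAlgebraic_iterate]
  simp_rw [← hσ_apply] at hη hδ ⊢
  exact dual_eq_pow_apply_of_pow_eq_one hσ hη.2 hδ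
end

section
/- (Perlis) Let F ⊆ K be finite fields with q = |F| and n = [K : F], let η ∈ K be a normal element of K over F, let c₀, c₁, …, c_{n−1} ∈ F, and set γ = c₀η + c₁η^q + ⋯ + c_{n−1}η^{q^{n−1}}. Then γ is a normal element of K over F if and only if the polynomials c(x) = c₀ + c₁x + ⋯ + c_{n−1}x^{n−1} and xⁿ − 1 are coprime in F[x]. -/
/-!
The Frobenius `φ : x ↦ x ^ q` is `F`-linear with `φ ^ n = 1`, so `K` is an `F[X]`-module via `φ`
and the conjugates of `v` span the cyclic submodule `F[X] • v`. Hence `v` is normal iff it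
generates this module, and for normal `η` the linear independence of its conjugates makes
`Xⁿ - 1` generate its annihilator. As `γ = c(φ) η`, the element `γ` generates iff `c` is a unit
modulo `Xⁿ - 1`, i.e. iff `c` and `Xⁿ - 1` are coprime.
-/

open Polynomial

namespace Module.End

open Submodule

variable {R V : Type*} [CommRing R] [AddCommGroup V] [Module R V] (φ : Module.End R V)

noncomputable def aevalAt (v : V) : R[X] →ₗ[R] V :=
  LinearMap.applyₗ v ∘ₗ (aeval φ).toLinearMap

variable {φ}

@[simp]
theorem aevalAt_apply (v : V) (f : R[X]) : aevalAt φ v f = aeval φ f v := rfl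

theorem aevalAt_aevalAt (v : V) (f g : R[X]) :
    aevalAt φ (aevalAt φ v g) f = aevalAt φ v (f * g) := by
  simp

theorem aevalAt_sum_C_mul_X_pow {n : ℕ} (v : V) (c : Fin n → R) :
    aevalAt φ v (∑ i : Fin n, C (c i) * X ^ (i : ℕ)) = ∑ i : Fin n, c i • (φ ^ (i : ℕ)) v := by
  simp [Module.algebraMap_end_apply]

theorem span_pow_apply_eq_range_aevalAt {n : ℕ} (hn : 0 < n) (hφ : φ ^ n = 1) (v : V) :
    span R (Set.range fun i : Fin n => (φ ^ (i : ℕ)) v) = LinearMap.range (aevalAt φ v) := by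
  refine le_antisymm (span_le.mpr ?_) ?_
  · rintro _ ⟨i, rfl⟩
    exact ⟨X ^ (i : ℕ), by simp⟩
  · rintro _ ⟨f, rfl⟩
    induction f using Polynomial.induction_on' with
    | add f g hf hg => rw [map_add]; exact add_mem hf hg
    | monomial j a =>
      rw [aevalAt_apply, aeval_monomial, pow_eq_pow_mod j hφ, Module.End.mul_apply,
        Module.algebraMap_end_apply]
      exact smul_mem _ _ (subset_span ⟨⟨j % n, Nat.mod_lt _ hn⟩, rfl⟩)

theorem aevalAt_eq_zero_iff_dvd {n : ℕ} (hn : 0 < n) (hφ : φ ^ n = 1) {v : V}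
    (hv : LinearIndependent R fun i : Fin n => (φ ^ (i : ℕ)) v) (f : R[X]) :
    aevalAt φ v f = 0 ↔ X ^ n - 1 ∣ f := by
  rcases subsingleton_or_nontrivial R with _ | _
  · simp only [Subsingleton.elim f 0, map_zero, dvd_zero]
  have hmonic : (X ^ n - 1 : R[X]).Monic := by simpa using monic_X_pow_sub_C (1 : R) hn.ne'
  have hroot : aeval φ (X ^ n - 1 : R[X]) = 0 := by simp [hφ]
  rw [← modByMonic_eq_zero_iff_dvd hmonic, aevalAt_apply,
    ← aeval_modByMonic_eq_self_of_root hroot]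
  set r := f %ₘ (X ^ n - 1)
  have hr : r.natDegree < n := by
    have hdeg : (X ^ n - 1 : R[X]).natDegree = n := by
      simpa using natDegree_X_pow_sub_C (n := n) (r := (1 : R))
    refine hdeg ▸ natDegree_modByMonic_lt f hmonic fun h => hn.ne' ?_
    rw [← hdeg, h, natDegree_one]
  refine ⟨fun h => ?_, fun h => by simp [h]⟩
  have hsum : ∑ i : Fin n, r.coeff i • (φ ^ (i : ℕ)) v = 0 := by
    rw [aeval_eq_sum_range' hr, LinearMap.sum_apply] at h
    simpa [Fin.sum_univ_eq_sum_range (fun i => r.coeff i • (φ ^ i) v)] using h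
  ext i
  rcases lt_or_ge i n with hi | hi
  · simpa using Fintype.linearIndependent_iff.mp hv _ hsum ⟨i, hi⟩
  · simpa using coeff_eq_zero_of_natDegree_lt (hr.trans_le hi)

theorem range_aevalAt_aevalAt_eq_top_iff {η : V} {a : R[X]}
    (hη : LinearMap.range (aevalAt φ η) = ⊤) (hker : ∀ f, aevalAt φ η f = 0 ↔ a ∣ f) (c : R[X]) :
    LinearMap.range (aevalAt φ (aevalAt φ η c)) = ⊤ ↔ IsCoprime c a := by
  simp_rw [LinearMap.range_eq_top, Function.Surjective, aevalAt_aevalAt]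
  constructor
  · intro h
    obtain ⟨u, hu⟩ := h η
    obtain ⟨v, hv⟩ := (hker (u * c - 1)).mp (by rw [map_sub, hu, sub_eq_zero]; simp)
    exact ⟨u, -v, by linear_combination hv⟩
  · rintro ⟨u, v, huv⟩ x
    obtain ⟨g, rfl⟩ := LinearMap.range_eq_top.mp hη x
    refine ⟨g * u, ?_⟩
    rw [← sub_eq_zero, ← map_sub, hker]
    exact ⟨-(g * v), by linear_combination g * huv⟩

end Module.End

theorem linearIndependent_and_span_eq_top_iff {K V ι : Type*} [DivisionRing K] [AddCommGroup V]
    [Module K V] [Fintype ι] {b : ι → V} (hcard : Fintype.card ι = Module.finrank K V) :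
    (LinearIndependent K b ∧ Submodule.span K (Set.range b) = ⊤) ↔
      Submodule.span K (Set.range b) = ⊤ :=
  and_iff_right_of_imp fun h => linearIndependent_of_top_le_span_of_card_eq_finrank h.ge hcard

namespace FiniteField

variable (F K : Type*) [Field F] [Fintype F]

theorem frobeniusAlgHom_toLinearMap_pow_apply [CommRing K] [Algebra F K] (i : ℕ) (x : K) :
    ((frobeniusAlgHom F K).toLinearMap ^ i) x = x ^ Fintype.card F ^ i := by
  rw [Module.End.pow_apply, AlgHom.coe_toLinearMap, coe_frobeniusAlgHom, pow_iterate]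

theorem frobeniusAlgHom_toLinearMap_pow_finrank [Field K] [Fintype K] [Algebra F K] :
    (frobeniusAlgHom F K).toLinearMap ^ Module.finrank F K = 1 := by
  ext x
  rw [frobeniusAlgHom_toLinearMap_pow_apply, ← Module.card_eq_pow_finrank, pow_card,
    Module.End.one_apply]

end FiniteField

open Module.End in
/-- (Perlis) Let `η` be a normal element of `K` over `F` and
`γ = c₀η + c₁η^q + ⋯ + c_{n−1}η^{q^{n−1}}` with `c_i ∈ F`. Then `γ` is normal over `F`
iff `c(x) = c₀ + c₁x + ⋯ + c_{n−1}x^{n−1}` and `xⁿ − 1` are coprime in `F[x]`. -/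
theorem stmt12 (F K : Type*) [Field F] [Fintype F] [Field K] [Fintype K] [Algebra F K]
    (n : ℕ) (hn : Module.finrank F K = n) (η : K)
    (hη : LinearIndependent F (fun i : Fin n => η ^ Fintype.card F ^ (i : ℕ)) ∧
      Submodule.span F (Set.range fun i : Fin n => η ^ Fintype.card F ^ (i : ℕ)) = ⊤)
    (c : Fin n → F) (γ : K)
    (hγ : γ = ∑ i : Fin n, c i • η ^ Fintype.card F ^ (i : ℕ)) :
    (LinearIndependent F (fun i : Fin n => γ ^ Fintype.card F ^ (i : ℕ)) ∧
        Submodule.span F (Set.range fun i : Fin n => γ ^ Fintype.card F ^ (i : ℕ)) = ⊤) ↔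
      IsCoprime (∑ i : Fin n, C (c i) * X ^ (i : ℕ)) ((X : Polynomial F) ^ n - 1) := by
  set φ := (FiniteField.frobeniusAlgHom F K).toLinearMap
  have hn0 : 0 < n := hn ▸ Module.finrank_pos
  have hφ : φ ^ n = 1 := hn ▸ FiniteField.frobeniusAlgHom_toLinearMap_pow_finrank F K
  simp only [← FiniteField.frobeniusAlgHom_toLinearMap_pow_apply F K] at hη hγ ⊢
  obtain ⟨hη_indep, hη_span⟩ := hη
  rw [span_pow_apply_eq_range_aevalAt hn0 hφ] at hη_span
  rw [linearIndependent_and_span_eq_top_iff (by simp [hn]),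
    span_pow_apply_eq_range_aevalAt hn0 hφ, hγ, ← aevalAt_sum_C_mul_X_pow]
  exact range_aevalAt_aevalAt_eq_top_iff hη_span (aevalAt_eq_zero_iff_dvd hn0 hφ hη_indep) _
end

section
/- Let F ⊆ K be finite fields of characteristic p with q = |F|, and suppose the degree n = [K : F] is a power of p. Then an element η ∈ K is a normal element of K over F if and only if Tr_{K/F}(η) ≠ 0. -/
/-!
The `q`-Frobenius `σ` is an `F`-linear endomorphism of `K` with `σ ^ n = 1`, and
`Tr_{K/F} = ∑_{i<n} σ ^ i`. As `n = p ^ m`, in characteristic `p` we have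
`(σ - 1) ^ n = σ ^ n - 1 = 0` and `(X - 1) ^ (n - 1) = ∑_{i<n} X ^ i`, so the trace is
`(σ - 1) ^ (n - 1)`. If this does not kill `η`, then `η, (σ - 1) η, …, (σ - 1) ^ (n - 1) η` are
linearly independent, and they lie in the span of the conjugates of `η`, which is therefore `K`.
Conversely, if the conjugates are linearly independent, their sum `Tr(η)` is nonzero.
-/

open Polynomial Module Finset

theorem Module.End.linearIndependent_pow_apply_of_pow_apply_eq_zero {K V : Type*} [DivisionRing K]
    [AddCommGroup V] [Module K V] {f : Module.End K V} {v : V} {n : ℕ}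
    (hvn : (f ^ (n + 1)) v = 0) (hv : (f ^ n) v ≠ 0) :
    LinearIndependent K fun k : Fin (n + 1) => (f ^ (k : ℕ)) v := by
  induction n generalizing v with
  | zero => simpa [linearIndependent_unique_iff] using hv
  | succ n ih =>
    refine linearIndependent_finSucc.mpr ⟨?_, fun hmem => hv ?_⟩
    · have htail : Fin.tail (fun k : Fin (n + 2) => (f ^ (k : ℕ)) v) =
          fun k : Fin (n + 1) => (f ^ (k : ℕ)) (f v) := by
        ext k
        simp [Fin.tail, pow_succ]
      rw [htail]
      exact ih (by rwa [← Module.End.mul_apply, ← pow_succ])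
        (by rwa [← Module.End.mul_apply, ← pow_succ])
    · have hker : Submodule.span K (Set.range (Fin.tail fun k : Fin (n + 2) => (f ^ (k : ℕ)) v)) ≤
          LinearMap.ker (f ^ (n + 1)) := by
        rw [Submodule.span_le]
        rintro _ ⟨k, rfl⟩
        simp only [Fin.tail, Fin.val_succ, SetLike.mem_coe, LinearMap.mem_ker,
          ← Module.End.mul_apply, ← pow_add]
        rw [show n + 1 + (k + 1) = k + (n + 2) by omega, pow_add, Module.End.mul_apply, hvn,
          map_zero]
      simpa using hker hmem

theorem Module.End.aeval_apply_mem_span_pow_apply {R M : Type*} [CommRing R] [AddCommGroup M]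
    [Module R M] {σ : Module.End R M} {n : ℕ} (hn : 0 < n) (hσ : σ ^ n = 1) (g : R[X]) (v : M) :
    aeval σ g v ∈ Submodule.span R (Set.range fun i : Fin n => (σ ^ (i : ℕ)) v) := by
  rw [aeval_endomorphism]
  refine Submodule.sum_mem _ fun i _ => Submodule.smul_mem _ _ (Submodule.subset_span ?_)
  exact ⟨⟨i % n, Nat.mod_lt i hn⟩, by simp only [← pow_eq_pow_mod i hσ]⟩

theorem sub_one_pow_expChar_pow_sub_one {F A : Type*} [Field F] [Ring A] [Algebra F A]
    (p : ℕ) [ExpChar F p] (m : ℕ) (a : A) :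
    (a - 1) ^ (p ^ m - 1) = ∑ i ∈ range (p ^ m), a ^ i := by
  have hX : ((X : F[X]) - 1) ^ (p ^ m - 1) = ∑ i ∈ range (p ^ m), (X : F[X]) ^ i := by
    refine mul_right_cancel₀ (X_sub_C_ne_zero (1 : F)) ?_
    rw [C_1, ← pow_succ, Nat.sub_add_cancel (pow_pos (expChar_pos F p) m), geom_sum_mul,
      sub_pow_expChar_pow, one_pow]
  simpa using congrArg (aeval a) hX

theorem Module.End.span_pow_apply_eq_top {F V : Type*} [Field F] [AddCommGroup V] [Module F V]
    {n : ℕ} (hV : finrank F V = n + 1) {σ : Module.End F V} (hσ : σ ^ (n + 1) = 1)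
    (hnil : (σ - 1) ^ (n + 1) = 0) {v : V} (hv : ((σ - 1) ^ n) v ≠ 0) :
    Submodule.span F (Set.range fun i : Fin (n + 1) => (σ ^ (i : ℕ)) v) = ⊤ := by
  have : FiniteDimensional F V := Module.finite_of_finrank_pos (hV ▸ n.succ_pos)
  set S := Submodule.span F (Set.range fun i : Fin (n + 1) => (σ ^ (i : ℕ)) v)
  have hmem (k : ℕ) : ((σ - 1) ^ k) v ∈ S := by
    have := Module.End.aeval_apply_mem_span_pow_apply n.succ_pos hσ ((X - 1) ^ k) v
    rwa [map_pow, map_sub, aeval_X, map_one] at this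
  have hli : LinearIndependent F fun k : Fin (n + 1) => (⟨((σ - 1) ^ (k : ℕ)) v, hmem k⟩ : S) :=
    .of_comp S.subtype <| Module.End.linearIndependent_pow_apply_of_pow_apply_eq_zero
      (by rw [hnil, LinearMap.zero_apply]) hv
  apply Submodule.eq_top_of_finrank_eq
  have := hli.fintype_card_le_finrank
  have := Submodule.finrank_le S
  rw [Fintype.card_fin] at *
  omega

theorem Module.End.pow_apply_basis_iff_sum_pow_apply_ne_zero {F V : Type*} [Field F]
    [AddCommGroup V] [Module F V] {p m : ℕ} [ExpChar F p] (hV : finrank F V = p ^ m)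
    {σ : Module.End F V} (hσ : σ ^ p ^ m = 1) (v : V) :
    (LinearIndependent F (fun i : Fin (p ^ m) => (σ ^ (i : ℕ)) v) ∧
        Submodule.span F (Set.range fun i : Fin (p ^ m) => (σ ^ (i : ℕ)) v) = ⊤) ↔
      ∑ i ∈ range (p ^ m), (σ ^ i) v ≠ 0 := by
  obtain ⟨n, hn⟩ : ∃ n, p ^ m = n + 1 := Nat.exists_eq_add_one.mpr (pow_pos (expChar_pos F p) m)
  have hgeom : (σ - 1) ^ n = ∑ i ∈ range (p ^ m), σ ^ i := by
    rw [← sub_one_pow_expChar_pow_sub_one (F := F) p m σ, hn, Nat.add_sub_cancel]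
  rw [hn] at hV hσ ⊢
  constructor
  · rintro ⟨hli, -⟩ hsum
    rw [Finset.sum_range (fun i => (σ ^ i) v)] at hsum
    exact one_ne_zero <| Fintype.linearIndependent_iff.mp hli (fun _ => 1) (by simpa using hsum) 0
  · intro hv
    have hnil : (σ - 1) ^ (n + 1) = 0 := by rw [pow_succ, hgeom, hn, geom_sum_mul, hσ, sub_self]
    have hS := Module.End.span_pow_apply_eq_top hV hσ hnil (by rwa [hgeom, hn, LinearMap.sum_apply])
    refine ⟨linearIndependent_of_top_le_span_of_card_eq_finrank hS.ge ?_, hS⟩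
    rw [Fintype.card_fin, hV]

/-- If the degree `n = [K : F]` is a power of the characteristic `p` of `F`, then
`η ∈ K` is a normal element of `K` over `F` iff `Tr_{K/F}(η) ≠ 0`. -/
theorem stmt14 (F K : Type*) [Field F] [Fintype F] [Field K] [Fintype K] [Algebra F K]
    (p n : ℕ) [CharP F p] (hn : Module.finrank F K = n) (hpow : ∃ m : ℕ, n = p ^ m)
    (η : K) :
    (LinearIndependent F (fun i : Fin n => η ^ Fintype.card F ^ (i : ℕ)) ∧
        Submodule.span F (Set.range fun i : Fin n => η ^ Fintype.card F ^ (i : ℕ)) = ⊤) ↔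
      Algebra.trace F K η ≠ 0 := by
  obtain ⟨m, rfl⟩ := hpow
  have : Fact p.Prime := ⟨CharP.char_is_prime F p⟩
  set σ : Module.End F K := (FiniteField.frobeniusAlgHom F K).toLinearMap
  have hσ (i : ℕ) (x : K) : (σ ^ i) x = x ^ Fintype.card F ^ i := by
    rw [Module.End.coe_pow]
    exact congrFun (pow_iterate (Fintype.card F) i) x
  have hσn : σ ^ p ^ m = 1 := by
    ext x
    rw [hσ, ← hn, ← Module.card_eq_pow_finrank, FiniteField.pow_card, Module.End.one_apply]
  have htrace : algebraMap F K (Algebra.trace F K η) = ∑ i ∈ range (p ^ m), (σ ^ i) η := by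
    simp only [hσ, FiniteField.algebraMap_trace_eq_sum_pow, hn, Nat.card_eq_fintype_card]
  simp only [← hσ]
  rw [Module.End.pow_apply_basis_iff_sum_pow_apply_ne_zero hn hσn, ← htrace, ne_eq,
    FaithfulSMul.algebraMap_eq_zero_iff]
end

section
/- Let p be a prime with p ≡ 1 (mod 3), and let A, B ∈ ℤ satisfy 4p = A² + 27B² and A ≡ 1 (mod 3). Then the cubic exponential sum g₀ = Σ_{x=0}^{p−1} exp(2πi·x³/p) ∈ ℂ is a root of the reduced cubic period polynomial x³ − 3px − Ap; that is, g₀³ = 3p·g₀ + A·p. -/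
/-!
Let `χ` be a character of order 3 on `ZMod p` and `ψ` the standard additive character. Counting
cube roots with `χ` gives `g₀ = τ(χ) + τ(χ²)`. Since `τ(χ)³ = pJ`, `τ(χ²)³ = pJ̄` and
`τ(χ)τ(χ²) = p` for the Jacobi sum `J = J(χ, χ)`, expanding the cube gives
`g₀³ = 3p·g₀ + p(J + J̄)`. Finally `J = x + yω` with `x ≡ -1` and `y ≡ 0 (mod 3)` and `JJ̄ = p`,
so `4p = (2x - y)² + 27(y/3)²` with `2x - y ≡ 1 (mod 3)`; such a representation is unique, hence
`J + J̄ = 2x - y = A`.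
-/

open Finset

section PowerFibres

variable {F R : Type*} [Field F] [Fintype F] [CommRing R] [IsDomain R]

lemma FiniteField.exists_isPrimitiveRoot_of_dvd {n : ℕ} (hn : n ∣ Fintype.card F - 1) :
    ∃ ζ : F, IsPrimitiveRoot ζ n := by
  classical
  obtain ⟨g, hg⟩ := IsCyclic.exists_ofOrder_eq_natCard (α := Fˣ)
  rw [Nat.card_eq_fintype_card, Fintype.card_units] at hg
  have hg' : IsPrimitiveRoot (g : F) (Fintype.card F - 1) :=
    IsPrimitiveRoot.coe_units_iff.mpr (hg ▸ IsPrimitiveRoot.orderOf g)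
  obtain ⟨k, hk⟩ := hn
  have hk0 : k ≠ 0 := by
    rintro rfl
    have := Fintype.one_lt_card (α := F)
    omega
  refine ⟨(g : F) ^ k, ?_⟩
  simpa [hk, hk0] using hg'.pow_of_dvd hk0 (Dvd.intro_left n hk.symm)

namespace MulChar

lemma exists_pow_orderOf_eq_of_apply_eq_one {χ : MulChar F R} {b : F} (hb : χ b = 1) :
    ∃ x : F, x ^ orderOf χ = b := by
  obtain ⟨g, hg⟩ := IsCyclic.exists_monoid_generator (α := Fˣ)
  have hbu : IsUnit b := by
    by_contra h
    rw [χ.map_nonunit h] at hb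
    exact zero_ne_one hb
  obtain ⟨k, hk : g ^ k = hbu.unit⟩ := hg hbu.unit
  have hχk : χ ^ k = 1 := by
    rw [eq_iff (fun y ↦ ?_), pow_apply_coe, one_apply_coe, ← map_pow, ← Units.val_pow_eq_pow_val,
      hk, hbu.unit_spec, hb]
    obtain ⟨j, rfl : g ^ j = y⟩ := hg y
    exact Subgroup.npow_mem_zpowers g j
  obtain ⟨j, rfl⟩ := orderOf_dvd_of_pow_eq_one hχk
  refine ⟨(g : F) ^ j, ?_⟩
  rw [← pow_mul, mul_comm, ← Units.val_pow_eq_pow_val, hk, hbu.unit_spec]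

variable [DecidableEq F]

lemma card_pow_orderOf_eq (χ : MulChar F R) (b : F) :
    (#{x | x ^ orderOf χ = b} : R) = 1 + ∑ j ∈ Ico 1 (orderOf χ), (χ ^ j) b := by
  have hm := χ.orderOf_pos
  rcases eq_or_ne b 0 with rfl | hb
  · have hroots : ({x | x ^ orderOf χ = 0} : Finset F) = {0} := by
      ext x
      simp [hm.ne']
    simp [hroots]
  have hsum : 1 + ∑ j ∈ Ico 1 (orderOf χ), (χ ^ j) b = ∑ j ∈ range (orderOf χ), χ b ^ j := by
    rw [range_eq_Ico, sum_eq_sum_Ico_succ_bot hm, pow_zero]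
    exact congrArg _ (sum_congr rfl fun j hj ↦
      pow_apply' χ (Nat.one_le_iff_ne_zero.mp (mem_Ico.mp hj).1) b)
  obtain ⟨ζ, hζ⟩ := FiniteField.exists_isPrimitiveRoot_of_dvd χ.orderOf_dvd_card_sub_one
  have hcard : #{x | x ^ orderOf χ = b} = Multiset.card (Polynomial.nthRoots (orderOf χ) b) := by
    rw [← Multiset.toFinset_card_of_nodup (hζ.nthRoots_nodup hb)]
    congr 1
    ext x
    simp [Polynomial.mem_nthRoots hm]
  rw [hsum, hcard, hζ.card_nthRoots]
  split_ifs with hex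
  · obtain ⟨x, rfl⟩ := hex
    have hx : x ≠ 0 := by rintro rfl; simp [hm.ne'] at hb
    rw [map_pow, ← pow_apply' χ hm.ne', pow_orderOf_eq_one, one_apply hx.isUnit]
    simp
  · have hne : χ b ≠ 1 := fun h ↦ hex (exists_pow_orderOf_eq_of_apply_eq_one h)
    have hpow : χ b ^ orderOf χ = 1 := by
      rw [← pow_apply' χ hm.ne', pow_orderOf_eq_one, one_apply hb.isUnit]
    have hgeom := geom_sum_mul (χ b) (orderOf χ)
    rw [hpow, sub_self] at hgeom
    exact_mod_cast ((mul_eq_zero.mp hgeom).resolve_right (sub_ne_zero.mpr hne)).symm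

end MulChar

lemma sum_addChar_pow_orderOf (χ : MulChar F R) {ψ : AddChar F R} (hψ : ψ ≠ 1) :
    ∑ x, ψ (x ^ orderOf χ) = ∑ j ∈ Ico 1 (orderOf χ), gaussSum (χ ^ j) ψ := by
  let _ := Classical.decEq F
  calc ∑ x, ψ (x ^ orderOf χ) = ∑ b, (#{x | x ^ orderOf χ = b} : R) * ψ b := by
        rw [← sum_fiberwise' univ (· ^ orderOf χ) ψ]
        simp [sum_const, nsmul_eq_mul]
    _ = ∑ b, ψ b + ∑ j ∈ Ico 1 (orderOf χ), gaussSum (χ ^ j) ψ := by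
        simp only [MulChar.card_pow_orderOf_eq, add_mul, one_mul, sum_mul, sum_add_distrib,
          gaussSum]
        rw [sum_comm]
    _ = _ := by rw [AddChar.sum_eq_zero_of_ne_one hψ, zero_add]

end PowerFibres

lemma ZMod.sum_range_natCast {M : Type*} [AddCommMonoid M] (n : ℕ) [NeZero n]
    (f : ZMod n → M) : ∑ x ∈ range n, f x = ∑ x : ZMod n, f x :=
  sum_nbij' (↑) ZMod.val (fun _ _ ↦ mem_univ _) (fun a _ ↦ mem_range.mpr a.val_lt)
    (fun _ ha ↦ ZMod.val_cast_of_lt (mem_range.mp ha)) (fun a _ ↦ ZMod.natCast_zmod_val a)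
    (fun _ _ ↦ rfl)

lemma sum_range_exp_eq_sum_stdAddChar (n k : ℕ) [NeZero n] :
    ∑ x ∈ range n, Complex.exp (2 * Real.pi * Complex.I * (x : ℂ) ^ k / n) =
      ∑ x : ZMod n, ZMod.stdAddChar (x ^ k) := by
  rw [← ZMod.sum_range_natCast]
  refine sum_congr rfl fun x _ ↦ ?_
  have h := ZMod.stdAddChar_coe (N := n) ((x ^ k : ℕ) : ℤ)
  push_cast at h
  rw [h]

lemma IsPrimitiveRoot.sq_add_self_add_one {R : Type*} [CommRing R] [IsDomain R] {ω : R}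
    (hω : IsPrimitiveRoot ω 3) : ω ^ 2 + ω + 1 = 0 := by
  have h := hω.geom_sum_eq_zero (by norm_num)
  simp only [sum_range_succ, sum_range_zero] at h
  linear_combination h

lemma IsPrimitiveRoot.conj_eq_neg_one_sub {ω : ℂ} (hω : IsPrimitiveRoot ω 3) :
    (starRingEnd ℂ) ω = -1 - ω := by
  rw [← Complex.inv_eq_conj (Complex.norm_eq_one_of_pow_eq_one hω.pow_eq_one (by norm_num))]
  exact inv_eq_of_mul_eq_one_right (by linear_combination -hω.sq_add_self_add_one)

lemma exists_eq_intCast_add_intCast_mul_of_mem_adjoin {R : Type*} [CommRing R] {ω : R}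
    (hω : ω ^ 2 + ω + 1 = 0) {z : R} (hz : z ∈ Algebra.adjoin ℤ {ω}) :
    ∃ a b : ℤ, z = a + b * ω := by
  induction hz using Algebra.adjoin_induction with
  | mem x hx => exact ⟨0, 1, by simp [Set.mem_singleton_iff.mp hx]⟩
  | algebraMap r => exact ⟨r, 0, by simp⟩
  | add x y _ _ ihx ihy =>
    obtain ⟨a, b, rfl⟩ := ihx
    obtain ⟨c, d, rfl⟩ := ihy
    exact ⟨a + c, b + d, by push_cast; ring⟩
  | mul x y _ _ ihx ihy =>
    obtain ⟨a, b, rfl⟩ := ihx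
    obtain ⟨c, d, rfl⟩ := ihy
    refine ⟨a * c - b * d, a * d + b * c - b * d, ?_⟩
    push_cast
    linear_combination (b * d : R) * hω

lemma sq_eq_inv_of_orderOf_eq_three {G : Type*} [Group G] {g : G} (hg : orderOf g = 3) :
    g ^ 2 = g⁻¹ :=
  eq_inv_of_mul_eq_one_left (by rw [← pow_succ]; exact (hg ▸ pow_orderOf_eq_one g :))

section CubicCharacter

variable {F R : Type*} [Field F] [Fintype F] [CommRing R] [IsDomain R]
  {χ : MulChar F R} (hχ : orderOf χ = 3)
include hχ

lemma exists_jacobiSum_eq_of_orderOf_eq_three {ω : R} (hω : IsPrimitiveRoot ω 3) :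
    ∃ a b : ℤ, jacobiSum χ χ = 3 * a - 1 + 3 * b * ω := by
  have hχ₃ : χ ^ 3 = 1 := hχ ▸ pow_orderOf_eq_one χ
  obtain ⟨z, hz, hJ⟩ := exists_jacobiSum_eq_neg_one_add (by norm_num) hχ₃ hχ₃
    (hχ ▸ χ.orderOf_dvd_card_sub_one) hω
  obtain ⟨s, t, rfl⟩ := exists_eq_intCast_add_intCast_mul_of_mem_adjoin hω.sq_add_self_add_one hz
  refine ⟨t, t - s, ?_⟩
  rw [hJ]
  push_cast
  linear_combination (s - 3 * t + t * ω : R) * hω.sq_add_self_add_one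

lemma gaussSum_add_gaussSum_sq_pow_three {ψ : AddChar F R} (hψ : ψ ≠ 1) :
    (gaussSum χ ψ + gaussSum (χ ^ 2) ψ) ^ 3 =
      3 * Fintype.card F * (gaussSum χ ψ + gaussSum (χ ^ 2) ψ) +
        Fintype.card F * (jacobiSum χ χ + jacobiSum (χ ^ 2) (χ ^ 2)) := by
  have hψ' := AddChar.IsPrimitive.of_ne_one hψ
  have hχ₂ : orderOf (χ ^ 2) = 3 := by rw [Nat.Coprime.orderOf_pow (by rw [hχ]; norm_num), hχ]
  have hodd (φ : MulChar F R) (hφ : orderOf φ = 3) : φ (-1) = 1 :=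
    MulChar.val_neg_one_eq_one_of_odd_order (n := 3) (by decide) (hφ ▸ pow_orderOf_eq_one φ)
  have hcube (φ : MulChar F R) (hφ : orderOf φ = 3) :
      gaussSum φ ψ ^ 3 = Fintype.card F * jacobiSum φ φ := by
    have h := gaussSum_pow_eq_prod_jacobiSum (χ := φ) (by rw [hφ]; norm_num) hψ'
    rw [hφ, hodd φ hφ] at h
    simpa using h
  have hprod : gaussSum χ ψ * gaussSum (χ ^ 2) ψ = Fintype.card F := by
    have h := gaussSum_mul_gaussSum_pow_orderOf_sub_one (χ := χ) (by rintro rfl; simp at hχ) hψ'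
    rw [hχ, hodd χ hχ] at h
    simpa using h
  linear_combination hcube χ hχ + hcube (χ ^ 2) hχ₂ +
    3 * (gaussSum χ ψ + gaussSum (χ ^ 2) ψ) * hprod

end CubicCharacter

section ComplexCubicCharacter

variable {F : Type*} [Field F] [Fintype F] {χ : MulChar F ℂ} (hχ : orderOf χ = 3)
include hχ

lemma jacobiSum_sq_sq_eq_conj :
    jacobiSum (χ ^ 2) (χ ^ 2) = (starRingEnd ℂ) (jacobiSum χ χ) := by
  rw [sq_eq_inv_of_orderOf_eq_three hχ, ← MulChar.star_eq_inv, ← jacobiSum_ringHomComp]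
  rfl

lemma jacobiSum_mul_jacobiSum_sq_sq :
    jacobiSum χ χ * jacobiSum (χ ^ 2) (χ ^ 2) = Fintype.card F := by
  have hχ₁ : χ ≠ 1 := by rintro rfl; simp at hχ
  have hχ₂ : χ * χ ≠ 1 := by
    rw [← sq]
    exact pow_ne_one_of_lt_orderOf (by norm_num) (by rw [hχ]; norm_num)
  have hchar : ringChar ℂ ≠ ringChar F := by
    rw [ringChar.eq_zero]
    exact (CharP.ringChar_ne_zero_of_finite F).symm
  rw [sq_eq_inv_of_orderOf_eq_three hχ]
  exact jacobiSum_mul_jacobiSum_inv hchar hχ₁ hχ₁ hχ₂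

end ComplexCubicCharacter

lemma eq_of_four_mul_prime_eq_sq_add_twentySeven_mul_sq {p : ℕ} (hp : p.Prime) {a b c d : ℤ}
    (h₁ : 4 * (p : ℤ) = a ^ 2 + 27 * b ^ 2) (h₂ : 4 * (p : ℤ) = c ^ 2 + 27 * d ^ 2)
    (ha : a % 3 = 1) (hc : c % 3 = 1) : a = c := by
  have hp0 : (0 : ℤ) < p := by exact_mod_cast hp.pos
  have hp3 : p ≠ 3 := by
    rintro rfl
    obtain ⟨k, rfl⟩ : ∃ k, a = 3 * k + 1 := ⟨a / 3, by omega⟩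
    ring_nf at h₁
    omega
  have hp27 : ¬ (p : ℤ) ∣ 27 := by
    rw [Int.natCast_dvd_ofNat, show 27 = 3 ^ 3 by rfl]
    exact fun h ↦ hp3 ((Nat.prime_dvd_prime_iff_eq hp Nat.prime_three).mp (hp.dvd_of_dvd_pow h))
  -- `(ac + 27be)² + 27(ae - bc)² = 16p²` forces `ae - bc = 0` once `p ∣ ae - bc`.
  have hsq (e : ℤ) (he : 4 * (p : ℤ) = c ^ 2 + 27 * e ^ 2) (hdvd : (p : ℤ) ∣ a * e - b * c) :
      a ^ 2 = c ^ 2 := by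
    have hzero : a * e - b * c = 0 := by
      by_contra hne
      have hle : (p : ℤ) ≤ |a * e - b * c| :=
        Int.le_of_dvd (abs_pos.mpr hne) ((dvd_abs _ _).mpr hdvd)
      nlinarith [sq_nonneg (a * c + 27 * b * e), sq_abs (a * e - b * c)]
    have h : 4 * (p : ℤ) * (a ^ 2 - c ^ 2) = 0 := by
      linear_combination a ^ 2 * he - c ^ 2 * h₁ + 27 * (a * e + b * c) * hzero
    linear_combination (mul_eq_zero.mp h).resolve_left (by positivity)
  have hdvd : (p : ℤ) ∣ 27 * ((a * d - b * c) * (a * (-d) - b * c)) :=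
    ⟨4 * (c ^ 2 - a ^ 2), by linear_combination a ^ 2 * h₂ - c ^ 2 * h₁⟩
  have hprime : Prime (p : ℤ) := Nat.prime_iff_prime_int.mp hp
  have hac : a ^ 2 = c ^ 2 := by
    rcases (hprime.dvd_or_dvd hdvd).resolve_left hp27 |> hprime.dvd_or_dvd with h | h
    · exact hsq d h₂ h
    · exact hsq (-d) (by linear_combination h₂) h
  rcases sq_eq_sq_iff_eq_or_eq_neg.mp hac with h | h
  · exact h
  · omega

lemma jacobiSum_add_jacobiSum_sq_eq {p : ℕ} [hp : Fact p.Prime] {χ : MulChar (ZMod p) ℂ}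
    (hχ : orderOf χ = 3) {A B : ℤ} (hAB : 4 * (p : ℤ) = A ^ 2 + 27 * B ^ 2) (hA : A % 3 = 1) :
    jacobiSum χ χ + jacobiSum (χ ^ 2) (χ ^ 2) = A := by
  obtain ⟨ω, hω⟩ : ∃ ω : ℂ, IsPrimitiveRoot ω 3 :=
    ⟨_, Complex.isPrimitiveRoot_exp 3 (by norm_num)⟩
  obtain ⟨a, b, hJ⟩ := exists_jacobiSum_eq_of_orderOf_eq_three hχ hω
  have hJ' : jacobiSum (χ ^ 2) (χ ^ 2) = 3 * a - 1 + 3 * b * (-1 - ω) := by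
    rw [jacobiSum_sq_sq_eq_conj hχ, hJ]
    simp [hω.conj_eq_neg_one_sub, map_ofNat]
  have hnorm := jacobiSum_mul_jacobiSum_sq_sq hχ
  rw [hJ, hJ', ZMod.card] at hnorm
  -- `J = x + yω` has norm `x² - xy + y² = p`, so `4p = (2x - y)² + 3y²` with `3 ∣ y`.
  have hnormℤ : (3 * a - 1) ^ 2 - (3 * a - 1) * (3 * b) + (3 * b) ^ 2 = (p : ℤ) := by
    have h : (((3 * a - 1) ^ 2 - (3 * a - 1) * (3 * b) + (3 * b) ^ 2 : ℤ) : ℂ) = p := by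
      push_cast
      linear_combination hnorm + (9 * b ^ 2 : ℂ) * hω.sq_add_self_add_one
    exact_mod_cast h
  have hA' : A = 6 * a - 2 - 3 * b :=
    eq_of_four_mul_prime_eq_sq_add_twentySeven_mul_sq hp.out hAB
      (d := b) (by linear_combination -4 * hnormℤ) hA (by omega)
  rw [hJ, hJ', hA']
  push_cast
  ring

/-- For a prime `p ≡ 1 (mod 3)` with `4p = A² + 27B²` and `A ≡ 1 (mod 3)`, the cubic
exponential sum `g₀ = Σ_{x=0}^{p−1} exp(2πi·x³/p)` is a root of the reduced cubic period
polynomial `x³ − 3px − Ap`. -/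
theorem stmt17 (p : ℕ) (hp : Nat.Prime p) (h3 : p % 3 = 1)
    (A B : ℤ) (hAB : 4 * (p : ℤ) = A ^ 2 + 27 * B ^ 2) (hA : A % 3 = 1)
    (g₀ : ℂ)
    (hg : g₀ = ∑ x ∈ Finset.range p,
      Complex.exp (2 * Real.pi * Complex.I * (x : ℂ) ^ 3 / (p : ℂ))) :
    g₀ ^ 3 = 3 * (p : ℂ) * g₀ + (A : ℂ) * (p : ℂ) := by
  have : Fact p.Prime := ⟨hp⟩
  obtain ⟨χ, hχ⟩ : ∃ χ : MulChar (ZMod p) ℂ, orderOf χ = 3 :=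
    MulChar.exists_mulChar_orderOf (ZMod p) (by rw [ZMod.card]; omega)
      (Complex.isPrimitiveRoot_exp 3 (by norm_num))
  have hψ : (ZMod.stdAddChar : AddChar (ZMod p) ℂ) ≠ 1 := fun h ↦
    ZMod.isPrimitive_stdAddChar p one_ne_zero (by rw [AddChar.mulShift_one, h])
  have hg₀ : g₀ = gaussSum χ ZMod.stdAddChar + gaussSum (χ ^ 2) ZMod.stdAddChar := by
    rw [hg, sum_range_exp_eq_sum_stdAddChar, ← hχ, sum_addChar_pow_orderOf χ hψ, hχ]
    simp [sum_Ico_succ_top]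
  rw [hg₀, gaussSum_add_gaussSum_sq_pow_three hχ hψ, jacobiSum_add_jacobiSum_sq_eq hχ hAB hA,
    ZMod.card]
  ring
end
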